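/- arXiv:1203.3236 — 7 statements merged into one kernel-verified Lean document; each statement's English description precedes it below -/
import Mathlib

section
/- Let ℓ be an odd prime and let M be the set of all A ∈ GL₂(𝔽_ℓ) having 1 or −1 as an eigenvalue. Then (ℓ − 1) · |M| ≤ 2 · |GL₂(𝔽_ℓ)|. -/
open Matrix
open scoped MatrixGroups

/-!
`GL n K` acts transitively on nonzero vectors, so fix `w ≠ 0` and choose `g u` with `g u w = u`
for each `u ≠ 0`. If `A v = μ • v` with `v ≠ 0`, `μ ≠ 0`, and `c ∈ Kˣ`, then
`(A * g (c • v)) w = μ • c • v`; so `A * g (c • v)` determines `c • v`, hence `A`, hence `c`.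
This embeds `Kˣ × {A | μ is an eigenvalue of A}` into `GL n K`; take `μ = 1` and `μ = -1`.
-/

theorem Matrix.GeneralLinearGroup.exists_mulVec_eq {n K : Type*} [Fintype n] [DecidableEq n]
    [Field K] {v w : n → K} (hv : v ≠ 0) (hw : w ≠ 0) :
    ∃ g : GL n K, (g : Matrix n n K) *ᵥ w = v := by
  obtain ⟨e, he⟩ := Submodule.exists_linearEquiv_restrict_eq
    ((LinearEquiv.toSpanNonzeroSingleton K _ w hw).symm ≪≫ₗ
      LinearEquiv.toSpanNonzeroSingleton K _ v hv)
  have hew : e w = v := by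
    have := he (LinearEquiv.toSpanNonzeroSingleton K _ w hw 1)
    rwa [LinearEquiv.trans_apply, LinearEquiv.symm_apply_apply,
      LinearEquiv.toSpanNonzeroSingleton_one, LinearEquiv.toSpanNonzeroSingleton_one,
      eq_comm] at this
  refine ⟨toLin.symm (LinearMap.GeneralLinearGroup.ofLinearEquiv e), ?_⟩
  rw [← hew, ← mulVecLin_apply, ← toLin_apply, MulEquiv.apply_symm_apply]
  rfl

theorem Matrix.GeneralLinearGroup.card_units_mul_card_det_sub_smul_eq_zero_le {n K : Type*}
    [Fintype n] [DecidableEq n] [Field K] [Finite K] {μ : K} (hμ : μ ≠ 0) :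
    (Nat.card K - 1) * Nat.card {A : GL n K // Matrix.det ((A : Matrix n n K) - μ • 1) = 0} ≤
      Nat.card (GL n K) := by
  set S := {A : GL n K // Matrix.det ((A : Matrix n n K) - μ • 1) = 0}
  rcases isEmpty_or_nonempty S with hS | ⟨⟨A₀⟩⟩
  · simp
  have eigenvector (A : S) : ∃ v ≠ 0, (A.1 : Matrix n n K) *ᵥ v = μ • v := by
    obtain ⟨v, hv0, hv⟩ := exists_mulVec_eq_zero_iff.mpr A.2
    exact ⟨v, hv0, by rwa [sub_mulVec, smul_mulVec, one_mulVec, sub_eq_zero] at hv⟩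
  choose v hv0 hv using eigenvector
  have transport (u : n → K) : ∃ g : GL n K, u ≠ 0 → (g : Matrix n n K) *ᵥ v A₀ = u := by
    by_cases hu : u = 0
    · exact ⟨1, fun h => absurd hu h⟩
    · obtain ⟨g, hg⟩ := exists_mulVec_eq hu (hv0 A₀)
      exact ⟨g, fun _ => hg⟩
  choose g hg using transport
  let Φ : Kˣ × S → GL n K := fun p => p.2.1 * g ((p.1 : K) • v p.2)
  have hΦ (p : Kˣ × S) : (Φ p : Matrix n n K) *ᵥ v A₀ = μ • (p.1 : K) • v p.2 := by
    rw [Units.val_mul, ← mulVec_mulVec, hg _ (smul_ne_zero p.1.ne_zero (hv0 p.2)),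
      mulVec_smul, hv, smul_comm]
  have hΦ_inj : Function.Injective Φ := by
    rintro ⟨c, A⟩ ⟨c', A'⟩ h
    have hcv : (c : K) • v A = (c' : K) • v A' := smul_right_injective _ hμ <| by
      simpa only [hΦ] using congrArg (fun B : GL n K => (B : Matrix n n K) *ᵥ v A₀) h
    have hA : A = A' := Subtype.ext (mul_right_cancel (by simpa only [Φ, hcv] using h))
    subst hA
    rw [Units.ext (smul_left_injective K (hv0 A) hcv)]
  rw [← Nat.card_units, ← Nat.card_prod]
  exact Nat.card_le_card_of_injective Φ hΦ_inj

theorem Nat.card_subtype_or_le {α : Type*} [Finite α] (p q : α → Prop) :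
    Nat.card {a // p a ∨ q a} ≤ Nat.card {a // p a} + Nat.card {a // q a} := by
  classical
  have := Fintype.ofFinite α
  simp only [Nat.card_eq_fintype_card]
  exact Fintype.card_subtype_or p q

theorem gl2_eigenvalue_pm_one_count_general (ℓ : ℕ) (hℓ : ℓ.Prime) :
    (ℓ - 1) * Nat.card {A : GL (Fin 2) (ZMod ℓ) //
        Matrix.det ((A : Matrix (Fin 2) (Fin 2) (ZMod ℓ)) - 1) = 0 ∨
        Matrix.det ((A : Matrix (Fin 2) (Fin 2) (ZMod ℓ)) + 1) = 0} ≤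
      2 * Nat.card (GL (Fin 2) (ZMod ℓ)) := by
  have := Fact.mk hℓ
  have h₁ := GeneralLinearGroup.card_units_mul_card_det_sub_smul_eq_zero_le (n := Fin 2)
    (one_ne_zero : (1 : ZMod ℓ) ≠ 0)
  have h₂ := GeneralLinearGroup.card_units_mul_card_det_sub_smul_eq_zero_le (n := Fin 2)
    (neg_ne_zero.mpr (one_ne_zero : (1 : ZMod ℓ) ≠ 0))
  simp only [one_smul, neg_smul, sub_neg_eq_add, Nat.card_zmod] at h₁ h₂
  refine (Nat.mul_le_mul_left _ (Nat.card_subtype_or_le _ _)).trans ?_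
  lia

/-- Let `ℓ` be an odd prime and let `M` be the set of all
`A ∈ GL₂(𝔽_ℓ)` having `1` or `−1` as an eigenvalue (i.e. `det (A - 1) = 0` or
`det (A + 1) = 0`).  Then `(ℓ − 1) * |M| ≤ 2 * |GL₂(𝔽_ℓ)|`. -/
theorem gl2_eigenvalue_pm_one_count (ℓ : ℕ) (hℓ : ℓ.Prime) (hodd : Odd ℓ) :
    (ℓ - 1) * Nat.card {A : GL (Fin 2) (ZMod ℓ) //
        Matrix.det ((A : Matrix (Fin 2) (Fin 2) (ZMod ℓ)) - 1) = 0 ∨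
        Matrix.det ((A : Matrix (Fin 2) (Fin 2) (ZMod ℓ)) + 1) = 0} ≤
      2 * Nat.card (GL (Fin 2) (ZMod ℓ)) :=
  gl2_eigenvalue_pm_one_count_general ℓ hℓ
end

section
/- Let ℓ be an odd prime and let G ≤ GL₂(𝔽_ℓ) be a subgroup such that det : G → 𝔽_ℓ^× is surjective and the image PG of G in PGL₂(𝔽_ℓ) = GL₂(𝔽_ℓ)/center is isomorphic as a group to the alternating group A₄, the symmetric group S₄, or the alternating group A₅. Then (ℓ − 1) · |M_G| ≤ 60 · |G|. -/
/-!
Let `π : GL₂(𝔽_ℓ) → PGL₂(𝔽_ℓ)` be the projection and `K = G ∩ SL₂(𝔽_ℓ)`. Surjectivity of `det`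
gives `|G| = (ℓ - 1) |K|`. Two elements of a fibre of `π` differ by a scalar `t`, and `t A` has
eigenvalue `±1` only when `±t` is a root of the reversed characteristic polynomial of `A`; so each
fibre of `M_G → π(G)` has at most `4` elements and `|M_G| ≤ 4 |π(G)| ≤ 240`. Since `G / K` is
abelian, `π(K)` contains the commutator subgroup of `π(G)`, which has order `4`, `12` or `60` for
`A₄`, `S₄`, `A₅`; hence `|K| ≥ 4`.
-/

open Matrix Polynomial
open scoped MatrixGroups

theorem Nat.card_le_mul_card_of_forall_card_fiber_le {α β : Type*} [Finite α] [Finite β]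
    (f : α → β) {k : ℕ} (h : ∀ a, Nat.card {a' // f a' = f a} ≤ k) :
    Nat.card α ≤ k * Nat.card β := by
  classical
  cases nonempty_fintype α
  cases nonempty_fintype β
  simp only [Nat.card_eq_fintype_card, Fintype.card_subtype] at h ⊢
  by_contra! hlt
  obtain ⟨b, hb⟩ := Fintype.exists_lt_card_fiber_of_mul_lt_card f (by rwa [mul_comm])
  obtain ⟨a, ha⟩ := Finset.card_pos.mp (k.zero_le.trans_lt hb)
  rw [(Finset.mem_filter.mp ha).2.symm] at hb
  exact (h a).not_gt hb

theorem MulEquiv.card_commutator_eq {G H : Type*} [Group G] [Group H] (e : G ≃* H) :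
    Nat.card (commutator G) = Nat.card (commutator H) := by
  rw [← Subgroup.card_map_of_injective (f := e.toMonoidHom) e.injective, map_commutator_eq,
    MonoidHom.range_eq_top.mpr e.surjective, commutator_def]

namespace MonoidHom

variable {G H : Type*} [Group G] [Group H]

theorem card_commutator_range_le_card_ker [Finite G] {A : Type*} [CommGroup A] (f : G →* H)
    (D : G →* A) : Nat.card (commutator f.range) ≤ Nat.card D.ker := by
  rw [← Subgroup.card_map_of_injective f.range.subtype_injective, Subgroup.map_subtype_commutator,
    ← map_commutator_eq]
  calc _ ≤ Nat.card (commutator G) := Nat.le_of_dvd Nat.card_pos (Subgroup.card_map_dvd _ _)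
    _ ≤ Nat.card D.ker := Subgroup.card_le_of_le (Abelianization.commutator_subset_ker D)

theorem card_eq_card_mul_card_ker_of_surjective (f : G →* H) (hf : Function.Surjective f) :
    Nat.card G = Nat.card H * Nat.card f.ker := by
  rw [← f.ker.card_mul_index, Subgroup.index_ker, f.range_eq_top.mpr hf, Subgroup.card_top,
    mul_comm]

end MonoidHom

theorem card_commutator_alternatingGroup_fin_four :
    Nat.card (commutator (alternatingGroup (Fin 4))) = 4 := by
  rw [← alternatingGroup.kleinFour_eq_commutator (by simp),
    alternatingGroup.kleinFour_card_of_card_eq_four (by simp)]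

theorem four_le_card_commutator_perm_fin_four :
    4 ≤ Nat.card (commutator (Equiv.Perm (Fin 4))) :=
  calc 4 = Nat.card (⁅alternatingGroup (Fin 4), alternatingGroup (Fin 4)⁆ : Subgroup _) := by
        rw [← Subgroup.map_subtype_commutator, Subgroup.card_map_of_injective
          (Subgroup.subtype_injective _), card_commutator_alternatingGroup_fin_four]
    _ ≤ Nat.card (commutator (Equiv.Perm (Fin 4))) :=
        Subgroup.card_le_of_le (Subgroup.commutator_mono le_top le_top)

theorem card_commutator_alternatingGroup_fin_five :
    Nat.card (commutator (alternatingGroup (Fin 5))) = 60 := by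
  rw [commutator_alternatingGroup_eq_top (by simp), Subgroup.card_top, nat_card_alternatingGroup]
  simp [Nat.factorial]

def IsExceptionalPolyhedral (H : Type*) [Group H] : Prop :=
  Nonempty (H ≃* alternatingGroup (Fin 4)) ∨ Nonempty (H ≃* Equiv.Perm (Fin 4)) ∨
    Nonempty (H ≃* alternatingGroup (Fin 5))

namespace IsExceptionalPolyhedral

variable {H : Type*} [Group H]

theorem card_le (hH : IsExceptionalPolyhedral H) : Nat.card H ≤ 60 := by
  rcases hH with ⟨⟨e⟩⟩ | ⟨⟨e⟩⟩ | ⟨⟨e⟩⟩ <;> rw [Nat.card_congr e.toEquiv]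
  · rw [nat_card_alternatingGroup, Nat.card_fin]; decide
  · rw [Nat.card_perm, Nat.card_fin]; decide
  · rw [nat_card_alternatingGroup, Nat.card_fin]; decide

theorem four_le_card_commutator (hH : IsExceptionalPolyhedral H) :
    4 ≤ Nat.card (commutator H) := by
  rcases hH with ⟨⟨e⟩⟩ | ⟨⟨e⟩⟩ | ⟨⟨e⟩⟩ <;> rw [e.card_commutator_eq]
  · exact card_commutator_alternatingGroup_fin_four.ge
  · exact four_le_card_commutator_perm_fin_four
  · rw [card_commutator_alternatingGroup_fin_five]; norm_num

end IsExceptionalPolyhedral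

namespace Matrix

variable {n R : Type*} [Fintype n] [DecidableEq n] [CommRing R]

theorem eval_charpolyRev_eq_det (M : Matrix n n R) (t : R) :
    M.charpolyRev.eval t = det (1 - t • M) := by
  rw [charpolyRev, ← coe_evalRingHom, RingHom.map_det]
  congr 1
  ext i j
  by_cases hij : i = j <;> simp [hij] <;> ring

theorem natDegree_charpolyRev_le (M : Matrix n n R) :
    M.charpolyRev.natDegree ≤ Fintype.card n := by
  nontriviality R
  rw [← reverse_charpoly]
  exact (reverse_natDegree_le _).trans M.charpoly_natDegree_eq_dim.le

theorem det_sub_eq_zero_comm (M N : Matrix n n R) :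
    det (M - N) = 0 ↔ det (N - M) = 0 := by
  rw [← neg_sub, det_neg, (isUnit_one.neg.pow _).mul_right_eq_zero]

theorem setOf_det_smul_sub_one_or_add_one_eq_zero (M : Matrix n n R) :
    {t : R | det (t • M - 1) = 0 ∨ det (t • M + 1) = 0} =
      {t | det (1 - t • M) = 0} ∪ -{t | det (1 - t • M) = 0} := by
  ext t
  simp [det_sub_eq_zero_comm _ (1 : Matrix n n R), add_comm (t • M)]

namespace GeneralLinearGroup

theorem exists_eq_mul_scalar_of_mk_eq {A B : GL n R}
    (h : (A : GL n R ⧸ Subgroup.center (GL n R)) = B) : ∃ u : Rˣ, B = A * scalar n u := by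
  obtain ⟨u, hu⟩ : A⁻¹ * B ∈ (scalar n).range := by
    rw [← center_eq_range_scalar]
    exact QuotientGroup.eq.mp h
  exact ⟨u, by rw [hu, mul_inv_cancel_left]⟩

end GeneralLinearGroup

variable [IsDomain R]

theorem setOf_det_one_sub_smul_eq_zero [DecidableEq R] (M : Matrix n n R) :
    {t : R | det (1 - t • M) = 0} = M.charpolyRev.roots.toFinset := by
  have hne : M.charpolyRev ≠ 0 := fun h => by simpa [h] using M.eval_charpolyRev
  ext t
  simp [hne, eval_charpolyRev_eq_det]

theorem finite_setOf_det_smul_sub_one_or_add_one_eq_zero (M : Matrix n n R) :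
    {t : R | det (t • M - 1) = 0 ∨ det (t • M + 1) = 0}.Finite := by
  classical
  rw [setOf_det_smul_sub_one_or_add_one_eq_zero, setOf_det_one_sub_smul_eq_zero]
  exact (Finset.finite_toSet _).union (Finset.finite_toSet _).neg

theorem ncard_setOf_det_smul_sub_one_or_add_one_eq_zero_le (M : Matrix n n R) :
    {t : R | det (t • M - 1) = 0 ∨ det (t • M + 1) = 0}.ncard ≤ 2 * Fintype.card n := by
  classical
  rw [setOf_det_smul_sub_one_or_add_one_eq_zero, setOf_det_one_sub_smul_eq_zero]
  have hroots := (Multiset.toFinset_card_le _).trans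
    ((card_roots' M.charpolyRev).trans M.natDegree_charpolyRev_le)
  grw [Set.ncard_union_le, Set.ncard_neg, Set.ncard_coe_finset]
  omega

namespace GeneralLinearGroup

theorem ncard_setOf_mk_eq_and_det_sub_one_or_add_one_eq_zero_le (A : GL n R) :
    {B : GL n R | (B : GL n R ⧸ Subgroup.center (GL n R)) = A ∧
      (Matrix.det ((B : Matrix n n R) - 1) = 0 ∨
        Matrix.det ((B : Matrix n n R) + 1) = 0)}.ncard ≤ 2 * Fintype.card n := by
  set T := {t : R | Matrix.det (t • (A : Matrix n n R) - 1) = 0 ∨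
    Matrix.det (t • (A : Matrix n n R) + 1) = 0}
  have hT : T.Finite := finite_setOf_det_smul_sub_one_or_add_one_eq_zero _
  calc _ = (Units.val '' _).ncard := (Set.ncard_image_of_injective _ Units.val_injective).symm
    _ ≤ ((· • (A : Matrix n n R)) '' T).ncard := by
        refine Set.ncard_le_ncard ?_ (hT.image _)
        rintro _ ⟨B, ⟨hBA, hB⟩, rfl⟩
        obtain ⟨u, rfl⟩ := exists_eq_mul_scalar_of_mk_eq hBA.symm
        have hval : (A * scalar n u).val = (u : R) • A.val := by simp [smul_eq_mul_diagonal]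
        exact ⟨u, by simpa only [T, Set.mem_ofPred_eq, ← hval] using hB, hval.symm⟩
    _ ≤ T.ncard := Set.ncard_image_le hT
    _ ≤ 2 * Fintype.card n := ncard_setOf_det_smul_sub_one_or_add_one_eq_zero_le _

theorem card_mem_and_det_sub_one_or_add_one_eq_zero_le [Finite R] (G : Subgroup (GL n R)) :
    Nat.card {A : GL n R // A ∈ G ∧
        (Matrix.det ((A : Matrix n n R) - 1) = 0 ∨ Matrix.det ((A : Matrix n n R) + 1) = 0)} ≤
      2 * Fintype.card n * Nat.card (G.map (QuotientGroup.mk' (Subgroup.center (GL n R)))) := by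
  set π := QuotientGroup.mk' (Subgroup.center (GL n R))
  refine Nat.card_le_mul_card_of_forall_card_fiber_le
    (fun A => (⟨π A.1, Subgroup.mem_map_of_mem π A.2.1⟩ : G.map π)) fun A => ?_
  calc _ ≤ Nat.card {B : GL n R | (B : GL n R ⧸ Subgroup.center (GL n R)) = A.1 ∧
        (Matrix.det ((B : Matrix n n R) - 1) = 0 ∨ Matrix.det ((B : Matrix n n R) + 1) = 0)} := by
        refine Nat.card_le_card_of_injective (fun B => ⟨B.1.1, ?_, B.1.2.2⟩) fun B C h => ?_
        · simpa [π, Subtype.ext_iff] using congrArg Subtype.val B.2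
        · exact Subtype.ext (Subtype.ext (by simpa using congrArg Subtype.val h))
    _ ≤ 2 * Fintype.card n := by
        rw [Nat.card_coe_set_eq]
        exact ncard_setOf_mk_eq_and_det_sub_one_or_add_one_eq_zero_le A.1

end GeneralLinearGroup

end Matrix

theorem gl2_exceptional_eigenvalue_pm_one_count_general (ℓ : ℕ) (hℓ : ℓ.Prime)
    (G : Subgroup (GL (Fin 2) (ZMod ℓ)))
    (hdet : Function.Surjective
      (fun g : G => Matrix.GeneralLinearGroup.det (g : GL (Fin 2) (ZMod ℓ))))
    (hPG :
      Nonempty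
        ((G.map (QuotientGroup.mk' (Subgroup.center (GL (Fin 2) (ZMod ℓ))))) ≃*
          alternatingGroup (Fin 4)) ∨
      Nonempty
        ((G.map (QuotientGroup.mk' (Subgroup.center (GL (Fin 2) (ZMod ℓ))))) ≃*
          Equiv.Perm (Fin 4)) ∨
      Nonempty
        ((G.map (QuotientGroup.mk' (Subgroup.center (GL (Fin 2) (ZMod ℓ))))) ≃*
          alternatingGroup (Fin 5))) :
    (ℓ - 1) * Nat.card {A : GL (Fin 2) (ZMod ℓ) // A ∈ G ∧
        (Matrix.det ((A : Matrix (Fin 2) (Fin 2) (ZMod ℓ)) - 1) = 0 ∨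
         Matrix.det ((A : Matrix (Fin 2) (Fin 2) (ZMod ℓ)) + 1) = 0)} ≤
      60 * Nat.card G := by
  have : Fact ℓ.Prime := ⟨hℓ⟩
  set π := QuotientGroup.mk' (Subgroup.center (GL (Fin 2) (ZMod ℓ)))
  have hPG : IsExceptionalPolyhedral (G.map π) := hPG
  set D : G →* (ZMod ℓ)ˣ := GeneralLinearGroup.det.comp G.subtype
  have hG : Nat.card G = (ℓ - 1) * Nat.card D.ker := by
    rw [D.card_eq_card_mul_card_ker_of_surjective hdet, Nat.card_units, Nat.card_zmod]
  have hK : 4 ≤ Nat.card D.ker := by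
    have := (π.comp G.subtype).card_commutator_range_le_card_ker D
    rw [MonoidHom.range_comp, Subgroup.range_subtype] at this
    exact hPG.four_le_card_commutator.trans this
  have hM := GeneralLinearGroup.card_mem_and_det_sub_one_or_add_one_eq_zero_le G
  calc _ ≤ (ℓ - 1) * (2 * 2 * 60) := by
        grw [hM, Fintype.card_fin, hPG.card_le]
    _ ≤ (ℓ - 1) * (60 * Nat.card D.ker) := Nat.mul_le_mul_left _ (by omega)
    _ = 60 * Nat.card G := by rw [hG]; ring

/-- Let `ℓ` be an odd prime and `G ≤ GL₂(𝔽_ℓ)` a subgroup such that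
`det : G → 𝔽_ℓˣ` is surjective and the image `PG` of `G` in
`PGL₂(𝔽_ℓ) = GL₂(𝔽_ℓ)/center` is isomorphic to `A₄`, `S₄` or `A₅`.
Then `(ℓ − 1) * |M_G| ≤ 60 * |G|`, where `M_G` is the set of `A ∈ G` having `1` or
`−1` as an eigenvalue. -/
theorem gl2_exceptional_eigenvalue_pm_one_count (ℓ : ℕ) (hℓ : ℓ.Prime) (hodd : Odd ℓ)
    (G : Subgroup (GL (Fin 2) (ZMod ℓ)))
    (hdet : Function.Surjective
      (fun g : G => Matrix.GeneralLinearGroup.det (g : GL (Fin 2) (ZMod ℓ))))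
    (hPG :
      Nonempty
        ((G.map (QuotientGroup.mk' (Subgroup.center (GL (Fin 2) (ZMod ℓ))))) ≃*
          alternatingGroup (Fin 4)) ∨
      Nonempty
        ((G.map (QuotientGroup.mk' (Subgroup.center (GL (Fin 2) (ZMod ℓ))))) ≃*
          Equiv.Perm (Fin 4)) ∨
      Nonempty
        ((G.map (QuotientGroup.mk' (Subgroup.center (GL (Fin 2) (ZMod ℓ))))) ≃*
          alternatingGroup (Fin 5))) :
    (ℓ - 1) * Nat.card {A : GL (Fin 2) (ZMod ℓ) // A ∈ G ∧
        (Matrix.det ((A : Matrix (Fin 2) (Fin 2) (ZMod ℓ)) - 1) = 0 ∨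
         Matrix.det ((A : Matrix (Fin 2) (Fin 2) (ZMod ℓ)) + 1) = 0)} ≤
      60 * Nat.card G :=
  gl2_exceptional_eigenvalue_pm_one_count_general ℓ hℓ G hdet hPG
end

section
/- Let ℓ be an odd prime, let f : 𝔽_{ℓ²} → M₂(𝔽_ℓ) be an injective 𝔽_ℓ-algebra homomorphism from the field with ℓ² elements into the 2×2 matrix algebra, and let T = f(𝔽_{ℓ²}^×) ⊆ GL₂(𝔽_ℓ) be the resulting non-split torus. Let G be a subgroup of the normalizer of T in GL₂(𝔽_ℓ) such that ℓ does not divide |G| and det : G → 𝔽_ℓ^× is surjective. Then (ℓ − 1) · |M_G| ≤ 2 · |G|. -/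
/-!
Pick a non-square `d` of `𝔽_ℓ` and `δ ∈ 𝔽_{ℓ²}` with `δ² = d`. Since `f δ` squares to the scalar
`d`, any `A` normalizing `T` conjugates `f δ` to `±f δ`. If `A` commutes with `f δ` it lies in
`f(𝔽_{ℓ²})`, where an eigenvalue `±1` forces `A = ±1`; if it anticommutes, `tr A = 0`, and an
eigenvalue `±1` forces `det A = -1`. Hence `M_G` lies in the two fibres `det⁻¹(±1)` of
`det : G → 𝔽_ℓˣ`, each of size `|G| / (ℓ - 1)`.
-/

open Matrix
open scoped MatrixGroups

namespace Matrix

variable {K : Type*} [Field K]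

theorem det_sub_one_fin_two (A : Matrix (Fin 2) (Fin 2) K) :
    det (A - 1) = det A - trace A + 1 := by
  simp [det_fin_two, trace_fin_two]
  ring

theorem det_add_one_fin_two (A : Matrix (Fin 2) (Fin 2) K) :
    det (A + 1) = det A + trace A + 1 := by
  simp [det_fin_two, trace_fin_two]
  ring

theorem trace_eq_zero_of_mul_eq_neg_mul {n : Type*} [Fintype n] [DecidableEq n]
    (h2 : (2 : K) ≠ 0) {A B : Matrix n n K} (hB : IsUnit B) (h : A * B = -(B * A)) :
    trace A = 0 := by
  obtain ⟨u, rfl⟩ := hB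
  have : trace A = -trace A := calc
    trace A = trace (A * (u : Matrix n n K) * u⁻¹.val) := by rw [mul_assoc, u.mul_inv, mul_one]
    _ = -trace (u⁻¹.val * ((u : Matrix n n K) * A)) := by
      rw [h, neg_mul, trace_neg, trace_mul_comm]
    _ = -trace A := by rw [← mul_assoc, u.inv_mul, one_mul]
  exact (mul_eq_zero.mp (by linear_combination this : (2 : K) * trace A = 0)).resolve_left h2

theorem exists_eq_smul_one_add_smul_of_commute {A B : Matrix (Fin 2) (Fin 2) K} (hB : B 0 1 ≠ 0)
    (h : Commute A B) : ∃ s t : K, A = s • 1 + t • B := by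
  have h00 := congrFun (congrFun h.eq 0) 0
  have h01 := congrFun (congrFun h.eq 0) 1
  simp only [mul_apply, Fin.sum_univ_two] at h00 h01
  refine ⟨A 0 0 - A 0 1 / B 0 1 * B 0 0, A 0 1 / B 0 1, ?_⟩
  ext i j
  fin_cases i <;> fin_cases j <;> simp <;> field_simp
  · linear_combination -h00
  · linear_combination -h01

end Matrix

namespace MonoidHom

variable {G H : Type*} [Group G] [Group H]

theorem ncard_preimage_singleton_le_card_ker [Finite G] (φ : G →* H) (u : H) :
    (φ ⁻¹' {u}).ncard ≤ Nat.card φ.ker := by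
  rcases (φ ⁻¹' {u}).eq_empty_or_nonempty with h | ⟨g₀, hg₀⟩
  · simp [h]
  rw [← SetLike.coe_sort_coe, Nat.card_coe_set_eq]
  refine Set.ncard_le_ncard_of_injOn (g₀⁻¹ * ·) (fun g hg => ?_)
    (fun g _ g' _ => mul_left_cancel)
  simp_all [mem_ker]

theorem ncard_preimage_le_card_mul_card_ker [Finite G] [DecidableEq H] (φ : G →* H)
    (s : Finset H) : (φ ⁻¹' s).ncard ≤ s.card * Nat.card φ.ker := by
  induction s using Finset.induction_on with
  | empty => simp
  | insert u s hu ih =>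
    rw [Finset.coe_insert, Set.insert_eq, Set.preimage_union, Finset.card_insert_of_notMem hu,
      add_mul, one_mul, add_comm]
    exact (Set.ncard_union_le _ _).trans (add_le_add (φ.ncard_preimage_singleton_le_card_ker u) ih)

theorem card_eq_card_mul_card_ker (φ : G →* H) (hφ : Function.Surjective φ) :
    Nat.card G = Nat.card H * Nat.card φ.ker := by
  rw [φ.ker.card_eq_card_quotient_mul_card_subgroup,
    Nat.card_congr (QuotientGroup.quotientKerEquivOfSurjective φ hφ).toEquiv]

end MonoidHom

theorem FiniteField.isSquare_algebraMap_of_card_eq_sq {K L : Type*} [Field K] [Field L]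
    [Algebra K L] [Finite L] (hL : Nat.card L = Nat.card K ^ 2) (a : K) :
    IsSquare (algebraMap K L a) := by
  have : Finite K := Finite.of_injective _ (algebraMap K L).injective
  have : Fintype K := Fintype.ofFinite K
  have : Fintype L := Fintype.ofFinite L
  by_cases hchar : ringChar L = 2
  · exact FiniteField.isSquare_of_char_two hchar _
  rcases eq_or_ne a 0 with rfl | ha
  · simp
  -- Euler's criterion, with `(q ^ 2 - 1) / 2 = (q - 1) * (q + 1) / 2`
  rw [FiniteField.isSquare_iff hchar ((map_ne_zero _).mpr ha)]
  have hoddL := FiniteField.odd_card_of_char_ne_two hchar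
  rw [← Nat.card_eq_fintype_card, hL] at hoddL ⊢
  obtain ⟨m, hm⟩ : Odd (Nat.card K) := (Nat.odd_pow_iff two_ne_zero).mp (Nat.odd_iff.mpr hoddL)
  have hexp : Nat.card K ^ 2 / 2 = (Fintype.card K - 1) * (m + 1) := by
    rw [← Nat.card_eq_fintype_card, hm, Nat.add_sub_cancel,
      show (2 * m + 1) ^ 2 = 1 + 2 * (2 * m * (m + 1)) by ring, Nat.add_mul_div_left _ _ two_pos]
    simp
  rw [hexp, pow_mul, ← map_pow, FiniteField.pow_card_sub_one_eq_one a ha, map_one, one_pow]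

theorem FiniteField.exists_not_isSquare_sq_eq_algebraMap {K L : Type*} [Field K] [Finite K]
    [Field L] [Algebra K L] [Finite L] (hK : ringChar K ≠ 2) (hL : Nat.card L = Nat.card K ^ 2) :
    ∃ (d : K) (δ : L), ¬IsSquare d ∧ δ ^ 2 = algebraMap K L d := by
  obtain ⟨d, hd⟩ := FiniteField.exists_nonsquare hK
  obtain ⟨δ, hδ⟩ := FiniteField.isSquare_algebraMap_of_card_eq_sq hL d
  exact ⟨d, δ, hd, by rw [hδ, sq]⟩

theorem ne_zero_of_sq_eq_algebraMap {K L : Type*} [Field K] [Field L] [Algebra K L] {d : K}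
    {δ : L} (hd : ¬IsSquare d) (hδ : δ ^ 2 = algebraMap K L d) : δ ≠ 0 := by
  rintro rfl
  exact hd ⟨0, by simpa using hδ.symm⟩

namespace AlgHom

variable {K L : Type*} [Field K] [Field L] [Algebra K L] (f : L →ₐ[K] Matrix (Fin 2) (Fin 2) K)

def torus : Subgroup (GL (Fin 2) K) :=
  (Units.map (f.toMonoidHom : L →* Matrix (Fin 2) (Fin 2) K)).range

variable {f} {d : K} {δ : L}

theorem apply_zero_one_ne_zero_of_sq_eq (hd : ¬IsSquare d) (hδ : δ ^ 2 = algebraMap K L d) :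
    f δ 0 1 ≠ 0 := by
  intro h01
  have h00 := congrFun (congrFun (congrArg f hδ) 0) 0
  simp only [sq, map_mul, Matrix.mul_apply, Fin.sum_univ_two, h01, zero_mul, add_zero, commutes,
    algebraMap_matrix_apply, if_true] at h00
  exact hd ⟨f δ 0 0, h00.symm⟩

theorem exists_eq_apply_of_commute (hd : ¬IsSquare d) (hδ : δ ^ 2 = algebraMap K L d)
    {A : Matrix (Fin 2) (Fin 2) K} (h : Commute A (f δ)) : ∃ x, A = f x := by
  obtain ⟨s, t, rfl⟩ := exists_eq_smul_one_add_smul_of_commute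
    (apply_zero_one_ne_zero_of_sq_eq hd hδ) h
  exact ⟨s • 1 + t • δ, by simp⟩

theorem det_apply_ne_zero {x : L} (hx : x ≠ 0) : det (f x) ≠ 0 :=
  det_ne_zero_of_right_inverse (B := f x⁻¹) (by rw [← map_mul, mul_inv_cancel₀ hx, map_one])

theorem commute_or_mul_eq_neg_mul_of_mem_normalizer (hd : ¬IsSquare d)
    (hδ : δ ^ 2 = algebraMap K L d) {A : GL (Fin 2) K}
    (hA : A ∈ Subgroup.normalizer (torus f : Set (GL (Fin 2) K))) :
    Commute (A : Matrix (Fin 2) (Fin 2) K) (f δ) ∨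
      (A : Matrix (Fin 2) (Fin 2) K) * f δ = -(f δ * A) := by
  obtain ⟨y, hy⟩ := (Subgroup.mem_normalizer_iff.mp hA _).mp
    ⟨Units.mk0 δ (ne_zero_of_sq_eq_algebraMap hd hδ), rfl⟩
  replace hy : f y = A * f δ * A⁻¹.val := by simpa using congrArg Units.val hy
  have hy2 : y.val ^ 2 = δ ^ 2 := f.toRingHom.injective <| by
    change f (y.val ^ 2) = f (δ ^ 2)
    rw [map_pow, hy, Units.conj_pow, ← map_pow, hδ, AlgHom.commutes, ← Algebra.commutes,
      mul_assoc, A.mul_inv, mul_one]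
  have hyA : f y * A = A * f δ := (Units.eq_mul_inv_iff_mul_eq A).mp hy
  rcases sq_eq_sq_iff_eq_or_eq_neg.mp hy2 with h | h
  · rw [h] at hyA
    exact Or.inl hyA.symm
  · rw [h, map_neg, neg_mul] at hyA
    exact Or.inr hyA.symm

theorem det_apply_eq_one_of_det_sub_one_or_det_add_one_eq_zero {x : L}
    (hx : det (f x - 1) = 0 ∨ det (f x + 1) = 0) : det (f x) = 1 := by
  rcases hx with hx | hx
  · obtain rfl : x = 1 := by
      by_contra h
      exact det_apply_ne_zero (f := f) (sub_ne_zero.mpr h) (by rwa [map_sub, map_one])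
    simp
  · obtain rfl : x = -1 := by
      by_contra h
      exact det_apply_ne_zero (f := f) (x := x + 1) (fun h0 => h (eq_neg_of_add_eq_zero_left h0))
        (by rwa [map_add, map_one])
    simp [det_neg]

theorem det_eq_one_or_neg_one_of_mem_normalizer (h2 : (2 : K) ≠ 0) (hd : ¬IsSquare d)
    (hδ : δ ^ 2 = algebraMap K L d) {A : GL (Fin 2) K}
    (hA : A ∈ Subgroup.normalizer (torus f : Set (GL (Fin 2) K)))
    (hA1 : det ((A : Matrix (Fin 2) (Fin 2) K) - 1) = 0 ∨
      det ((A : Matrix (Fin 2) (Fin 2) K) + 1) = 0) :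
    det (A : Matrix (Fin 2) (Fin 2) K) = 1 ∨ det (A : Matrix (Fin 2) (Fin 2) K) = -1 := by
  rcases commute_or_mul_eq_neg_mul_of_mem_normalizer hd hδ hA with hc | hac
  · obtain ⟨x, hx⟩ := exists_eq_apply_of_commute hd hδ hc
    rw [hx] at hA1 ⊢
    exact Or.inl (det_apply_eq_one_of_det_sub_one_or_det_add_one_eq_zero hA1)
  · have htr := trace_eq_zero_of_mul_eq_neg_mul h2
      ((isUnit_iff_ne_zero.mpr (ne_zero_of_sq_eq_algebraMap hd hδ)).map f) hac
    rw [det_sub_one_fin_two, det_add_one_fin_two, htr] at hA1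
    right
    rcases hA1 with h | h <;> linear_combination h

end AlgHom

theorem gl2_nonsplit_normalizer_eigenvalue_pm_one_count_general (ℓ : ℕ) [Fact ℓ.Prime] (hodd : Odd ℓ)
    (f : GaloisField ℓ 2 →ₐ[ZMod ℓ] Matrix (Fin 2) (Fin 2) (ZMod ℓ))
    (G : Subgroup (GL (Fin 2) (ZMod ℓ)))
    (hG : G ≤ Subgroup.normalizer
      ((Units.map (f.toMonoidHom : GaloisField ℓ 2 →* Matrix (Fin 2) (Fin 2) (ZMod ℓ))).range))
    (hdet : Function.Surjective
      (fun g : G => Matrix.GeneralLinearGroup.det (g : GL (Fin 2) (ZMod ℓ)))) :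
    (ℓ - 1) * Nat.card {A : GL (Fin 2) (ZMod ℓ) // A ∈ G ∧
        (Matrix.det ((A : Matrix (Fin 2) (Fin 2) (ZMod ℓ)) - 1) = 0 ∨
         Matrix.det ((A : Matrix (Fin 2) (Fin 2) (ZMod ℓ)) + 1) = 0)} ≤
      2 * Nat.card G := by
  classical
  have hchar : ringChar (ZMod ℓ) ≠ 2 := by
    rw [ZMod.ringChar_zmod_n]
    rintro rfl
    exact Nat.not_even_iff_odd.mpr hodd even_two
  obtain ⟨d, δ, hd, hδ⟩ := FiniteField.exists_not_isSquare_sq_eq_algebraMap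
    (L := GaloisField ℓ 2) hchar (by rw [GaloisField.card ℓ 2 two_ne_zero, Nat.card_zmod])
  set φ : G →* (ZMod ℓ)ˣ := GeneralLinearGroup.det.comp G.subtype
  have hGcard : Nat.card G = (ℓ - 1) * Nat.card φ.ker := by
    rw [φ.card_eq_card_mul_card_ker hdet, Nat.card_eq_fintype_card, ZMod.card_units]
  calc _ = (ℓ - 1) * {g : G |
          det (((g : GL (Fin 2) (ZMod ℓ)) : Matrix (Fin 2) (Fin 2) (ZMod ℓ)) - 1) = 0 ∨
          det (((g : GL (Fin 2) (ZMod ℓ)) : Matrix (Fin 2) (Fin 2) (ZMod ℓ)) + 1) = 0}.ncard := by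
        rw [← Nat.card_coe_set_eq]
        exact congrArg _ (Nat.card_congr (Equiv.subtypeSubtypeEquivSubtypeInter (· ∈ G) _).symm)
    _ ≤ (ℓ - 1) * (φ ⁻¹' ↑({1, -1} : Finset (ZMod ℓ)ˣ)).ncard := by
      refine Nat.mul_le_mul_left _ (Set.ncard_le_ncard fun g hg => ?_)
      simpa [φ, Units.ext_iff] using
        AlgHom.det_eq_one_or_neg_one_of_mem_normalizer (Ring.two_ne_zero hchar) hd hδ (hG g.2) hg
    _ ≤ (ℓ - 1) * (2 * Nat.card φ.ker) := Nat.mul_le_mul_left _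
      ((φ.ncard_preimage_le_card_mul_card_ker _).trans (Nat.mul_le_mul_right _ Finset.card_le_two))
    _ = 2 * Nat.card G := by rw [hGcard]; ring

/-- Let `ℓ` be an odd prime, `f : 𝔽_{ℓ²} → M₂(𝔽_ℓ)` an injective
`𝔽_ℓ`-algebra homomorphism, and `T = f(𝔽_{ℓ²}ˣ) ⊆ GL₂(𝔽_ℓ)` the resulting non-split
torus.  Let `G` be a subgroup of the normalizer of `T` such that `ℓ ∤ |G|` and
`det : G → 𝔽_ℓˣ` is surjective.  Then `(ℓ − 1) * |M_G| ≤ 2 * |G|`. -/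
theorem gl2_nonsplit_normalizer_eigenvalue_pm_one_count (ℓ : ℕ) [Fact ℓ.Prime] (hodd : Odd ℓ)
    (f : GaloisField ℓ 2 →ₐ[ZMod ℓ] Matrix (Fin 2) (Fin 2) (ZMod ℓ))
    (hf : Function.Injective f)
    (G : Subgroup (GL (Fin 2) (ZMod ℓ)))
    (hG : G ≤ Subgroup.normalizer
      ((Units.map (f.toMonoidHom : GaloisField ℓ 2 →* Matrix (Fin 2) (Fin 2) (ZMod ℓ))).range))
    (hord : ¬ ℓ ∣ Nat.card G)
    (hdet : Function.Surjective
      (fun g : G => Matrix.GeneralLinearGroup.det (g : GL (Fin 2) (ZMod ℓ)))) :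
    (ℓ - 1) * Nat.card {A : GL (Fin 2) (ZMod ℓ) // A ∈ G ∧
        (Matrix.det ((A : Matrix (Fin 2) (Fin 2) (ZMod ℓ)) - 1) = 0 ∨
         Matrix.det ((A : Matrix (Fin 2) (Fin 2) (ZMod ℓ)) + 1) = 0)} ≤
      2 * Nat.card G :=
  gl2_nonsplit_normalizer_eigenvalue_pm_one_count_general ℓ hodd f G hG hdet
end

section
/- Let ℓ be an odd prime, let T ≤ GL₂(𝔽_ℓ) be the subgroup of invertible diagonal matrices, and let N ≤ GL₂(𝔽_ℓ) be the subgroup of monomial matrices, i.e. the subgroup generated by T and the permutation matrix w = [[0,1],[1,0]] (this is the normalizer of T). Let G ≤ N be a subgroup that is not contained in T, such that ℓ does not divide |G| and det : G → 𝔽_ℓ^× is surjective. Then (ℓ − 1) · |M_G|² ≤ 36 · |G|². -/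
open Matrix
open scoped MatrixGroups

/-- The permutation matrix `w = [[0,1],[1,0]]` as an element of `GL₂`. -/
def wPerm (R : Type*) [CommRing R] : GL (Fin 2) R :=
  ⟨!![0, 1; 1, 0], !![0, 1; 1, 0],
    by simp [Matrix.mul_fin_two, Matrix.one_fin_two],
    by simp [Matrix.mul_fin_two, Matrix.one_fin_two]⟩

/-- The set of diagonal invertible `2 × 2` matrices, i.e. the split torus `T`. -/
def diagTorus (R : Type*) [CommRing R] : Set (GL (Fin 2) R) :=
  {A | (A : Matrix (Fin 2) (Fin 2) R) 0 1 = 0 ∧ (A : Matrix (Fin 2) (Fin 2) R) 1 0 = 0}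

section Aux

variable {R : Type*} [CommRing R]

lemma mul_entry2 (A B : Matrix (Fin 2) (Fin 2) R) (i j : Fin 2) :
    (A * B) i j = A i 0 * B 0 j + A i 1 * B 1 j := by
  rw [Matrix.mul_apply, Fin.sum_univ_two]

lemma glcoe_mul (A B : GL (Fin 2) R) :
    ((A * B : GL (Fin 2) R) : Matrix (Fin 2) (Fin 2) R) = (A : Matrix (Fin 2) (Fin 2) R) * B :=
  rfl

lemma gl_mul_inv_coe (A : GL (Fin 2) R) :
    (A : Matrix (Fin 2) (Fin 2) R) * ((A⁻¹ : GL (Fin 2) R) : Matrix (Fin 2) (Fin 2) R) = 1 := by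
  rw [← glcoe_mul, mul_inv_cancel]
  rfl

/-- The split torus as a subgroup. -/
def diagSubgroup (R : Type*) [CommRing R] : Subgroup (GL (Fin 2) R) where
  carrier := diagTorus R
  one_mem' := by
    constructor <;> simp [diagTorus]
  mul_mem' := by
    rintro a b ⟨ha1, ha2⟩ ⟨hb1, hb2⟩
    constructor <;>
      simp [glcoe_mul, mul_entry2, ha1, ha2, hb1, hb2]
  inv_mem' := by
    rintro A ⟨h1, h2⟩
    set B := ((A⁻¹ : GL (Fin 2) R) : Matrix (Fin 2) (Fin 2) R) with hB
    have hAB : (A : Matrix (Fin 2) (Fin 2) R) * B = 1 := gl_mul_inv_coe A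
    have e00 : (A : Matrix (Fin 2) (Fin 2) R) 0 0 * B 0 0 = 1 := by
      have := congrArg (fun M => M 0 0) hAB
      simpa [mul_entry2, h1] using this
    have e01 : (A : Matrix (Fin 2) (Fin 2) R) 0 0 * B 0 1 = 0 := by
      have := congrArg (fun M => M 0 1) hAB
      simpa [mul_entry2, h1] using this
    have e11 : (A : Matrix (Fin 2) (Fin 2) R) 1 1 * B 1 1 = 1 := by
      have := congrArg (fun M => M 1 1) hAB
      simpa [mul_entry2, h2] using this
    have e10 : (A : Matrix (Fin 2) (Fin 2) R) 1 1 * B 1 0 = 0 := by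
      have := congrArg (fun M => M 1 0) hAB
      simpa [mul_entry2, h2] using this
    constructor
    · linear_combination (-(B 0 1)) * e00 + B 0 0 * e01
    · linear_combination (-(B 1 0)) * e11 + B 1 1 * e10

lemma mem_diagSubgroup_iff {A : GL (Fin 2) R} :
    A ∈ diagSubgroup R ↔ (A : Matrix (Fin 2) (Fin 2) R) 0 1 = 0 ∧
      (A : Matrix (Fin 2) (Fin 2) R) 1 0 = 0 := Iff.rfl

/-- Antidiagonal predicate. -/
def IsAnti (A : GL (Fin 2) R) : Prop :=
  (A : Matrix (Fin 2) (Fin 2) R) 0 0 = 0 ∧ (A : Matrix (Fin 2) (Fin 2) R) 1 1 = 0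

/-- The monomial matrices as a subgroup. -/
def monoSubgroup (R : Type*) [CommRing R] : Subgroup (GL (Fin 2) R) where
  carrier := {A | A ∈ diagSubgroup R ∨ IsAnti A}
  one_mem' := Or.inl (diagSubgroup R).one_mem
  mul_mem' := by
    rintro a b (⟨ha1, ha2⟩ | ⟨ha1, ha2⟩) (⟨hb1, hb2⟩ | ⟨hb1, hb2⟩)
    · exact Or.inl ((diagSubgroup R).mul_mem ⟨ha1, ha2⟩ ⟨hb1, hb2⟩)
    · refine Or.inr ⟨?_, ?_⟩ <;> simp [glcoe_mul, mul_entry2, ha1, ha2, hb1, hb2]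
    · refine Or.inr ⟨?_, ?_⟩ <;> simp [glcoe_mul, mul_entry2, ha1, ha2, hb1, hb2]
    · refine Or.inl ⟨?_, ?_⟩ <;> simp [glcoe_mul, mul_entry2, ha1, ha2, hb1, hb2]
  inv_mem' := by
    rintro A (hA | ⟨h1, h2⟩)
    · exact Or.inl ((diagSubgroup R).inv_mem hA)
    · set B := ((A⁻¹ : GL (Fin 2) R) : Matrix (Fin 2) (Fin 2) R) with hB
      have hAB : (A : Matrix (Fin 2) (Fin 2) R) * B = 1 := gl_mul_inv_coe A
      have e00 : (A : Matrix (Fin 2) (Fin 2) R) 0 1 * B 1 0 = 1 := by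
        have := congrArg (fun M => M 0 0) hAB
        simpa [mul_entry2, h1] using this
      have e01 : (A : Matrix (Fin 2) (Fin 2) R) 0 1 * B 1 1 = 0 := by
        have := congrArg (fun M => M 0 1) hAB
        simpa [mul_entry2, h1] using this
      have e11 : (A : Matrix (Fin 2) (Fin 2) R) 1 0 * B 0 1 = 1 := by
        have := congrArg (fun M => M 1 1) hAB
        simpa [mul_entry2, h2] using this
      have e10 : (A : Matrix (Fin 2) (Fin 2) R) 1 0 * B 0 0 = 0 := by
        have := congrArg (fun M => M 1 0) hAB
        simpa [mul_entry2, h2] using this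
      refine Or.inr ⟨?_, ?_⟩
      · linear_combination (-(B 0 0)) * e11 + B 0 1 * e10
      · linear_combination (-(B 1 1)) * e00 + B 1 0 * e01

lemma closure_le_mono :
    Subgroup.closure (diagTorus R ∪ {wPerm R}) ≤ monoSubgroup R := by
  rw [Subgroup.closure_le]
  rintro A (hA | hA)
  · exact Or.inl hA
  · rw [Set.mem_singleton_iff] at hA
    subst hA
    refine Or.inr ⟨?_, ?_⟩ <;> rfl

/-- the `(i,i)` entry of a diagonal invertible matrix, as a unit. -/
def diagEntryHom (R : Type*) [CommRing R] (i : Fin 2) : (diagSubgroup R) →* Rˣ where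
  toFun h :=
    { val := ((h : GL (Fin 2) R) : Matrix (Fin 2) (Fin 2) R) i i
      inv := (((h⁻¹ : diagSubgroup R) : GL (Fin 2) R) : Matrix (Fin 2) (Fin 2) R) i i
      val_inv := by
        have hAB := gl_mul_inv_coe (h : GL (Fin 2) R)
        have hd := h.2
        rw [mem_diagSubgroup_iff] at hd
        have := congrArg (fun M => M i i) hAB
        fin_cases i <;>
          simpa [mul_entry2, hd.1, hd.2] using this
      inv_val := by
        have hAB := gl_mul_inv_coe (h : GL (Fin 2) R)
        have hd := h.2
        rw [mem_diagSubgroup_iff] at hd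
        have := congrArg (fun M => M i i) hAB
        fin_cases i <;>
          · rw [mul_comm]
            simpa [mul_entry2, hd.1, hd.2] using this }
  map_one' := by
    apply Units.ext
    fin_cases i <;> simp
  map_mul' := by
    intro a b
    apply Units.ext
    have hda := a.2; have hdb := b.2
    rw [mem_diagSubgroup_iff] at hda hdb
    fin_cases i <;>
      simp [glcoe_mul, mul_entry2, hda.1, hda.2, hdb.1, hdb.2]

lemma card_fiber_le_card_ker {α β : Type*} [Group α] [Group β] [Finite α]
    (f : α →* β) (c : β) :
    Nat.card {a : α // f a = c} ≤ Nat.card f.ker := by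
  rcases isEmpty_or_nonempty {a : α // f a = c} with h | ⟨⟨a₀, ha₀⟩⟩
  · simp [Nat.card_of_isEmpty]
  · apply Nat.card_le_card_of_injective
      (fun x : {a : α // f a = c} => (⟨a₀⁻¹ * x.1, by
        have : f (a₀⁻¹ * x.1) = 1 := by
          rw [_root_.map_mul, _root_.map_inv, ha₀, x.2, inv_mul_cancel]
        exact this⟩ : f.ker))
    intro x y hxy
    have := congrArg (fun z : f.ker => (z : α)) hxy
    simp only at this
    ext
    exact mul_left_cancel this

lemma card_ker_mul_card_range {α β : Type*} [Group α] [Group β]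
    (f : α →* β) : Nat.card f.ker * Nat.card f.range = Nat.card α := by
  rw [← Subgroup.index_ker f]
  exact Subgroup.card_mul_index f.ker


lemma anti_inv {R : Type*} [CommRing R] {A : GL (Fin 2) R} (hA : IsAnti A) :
    IsAnti A⁻¹ := by
  obtain ⟨h1, h2⟩ := hA
  set B := ((A⁻¹ : GL (Fin 2) R) : Matrix (Fin 2) (Fin 2) R) with hB
  have hAB : (A : Matrix (Fin 2) (Fin 2) R) * B = 1 := gl_mul_inv_coe A
  have e00 : (A : Matrix (Fin 2) (Fin 2) R) 0 1 * B 1 0 = 1 := by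
    have := congrArg (fun M => M 0 0) hAB
    simpa [mul_entry2, h1] using this
  have e01 : (A : Matrix (Fin 2) (Fin 2) R) 0 1 * B 1 1 = 0 := by
    have := congrArg (fun M => M 0 1) hAB
    simpa [mul_entry2, h1] using this
  have e11 : (A : Matrix (Fin 2) (Fin 2) R) 1 0 * B 0 1 = 1 := by
    have := congrArg (fun M => M 1 1) hAB
    simpa [mul_entry2, h2] using this
  have e10 : (A : Matrix (Fin 2) (Fin 2) R) 1 0 * B 0 0 = 0 := by
    have := congrArg (fun M => M 1 0) hAB
    simpa [mul_entry2, h2] using this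
  constructor
  · linear_combination (-(B 0 0)) * e11 + B 0 1 * e10
  · linear_combination (-(B 1 1)) * e00 + B 1 0 * e01

/-- The `(i,i)` entry hom on `G ⊓ T`. -/
def torusEntry (R : Type*) [CommRing R] (G : Subgroup (GL (Fin 2) R)) (i : Fin 2) :
    ↥(G ⊓ diagSubgroup R) →* Rˣ :=
  (diagEntryHom R i).comp (Subgroup.inclusion inf_le_right)

lemma torusEntry_val {R : Type*} [CommRing R] (G : Subgroup (GL (Fin 2) R)) (i : Fin 2)
    (h : ↥(G ⊓ diagSubgroup R)) :
    ((torusEntry R G i h : Rˣ) : R) = ((h : GL (Fin 2) R) : Matrix (Fin 2) (Fin 2) R) i i :=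
  rfl

/-- The determinant hom on `G ⊓ T`. -/
def detOnH (R : Type*) [CommRing R] (G : Subgroup (GL (Fin 2) R)) :
    ↥(G ⊓ diagSubgroup R) →* Rˣ :=
  (Matrix.GeneralLinearGroup.det).comp (G ⊓ diagSubgroup R).subtype

lemma detOnH_val {R : Type*} [CommRing R] (G : Subgroup (GL (Fin 2) R))
    (h : ↥(G ⊓ diagSubgroup R)) :
    ((detOnH R G h : Rˣ) : R) = Matrix.det ((h : GL (Fin 2) R) : Matrix (Fin 2) (Fin 2) R) :=
  rfl

end Aux

/-- Let `ℓ` be an odd prime, `T ≤ GL₂(𝔽_ℓ)` the subgroup of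
invertible diagonal matrices and `N` the subgroup of monomial matrices, generated by
`T` and `w = [[0,1],[1,0]]`.  Let `G ≤ N` be a subgroup not contained in `T`, with
`ℓ ∤ |G|` and `det : G → 𝔽_ℓˣ` surjective.  Then `(ℓ − 1) * |M_G|² ≤ 36 * |G|²`. -/
theorem gl2_split_normalizer_eigenvalue_pm_one_count (ℓ : ℕ) (hℓ : ℓ.Prime) (hodd : Odd ℓ)
    (G : Subgroup (GL (Fin 2) (ZMod ℓ)))
    (hGN : G ≤ Subgroup.closure (diagTorus (ZMod ℓ) ∪ {wPerm (ZMod ℓ)}))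
    (hGT : ¬ (G : Set (GL (Fin 2) (ZMod ℓ))) ⊆ diagTorus (ZMod ℓ))
    (hord : ¬ ℓ ∣ Nat.card G)
    (hdet : Function.Surjective
      (fun g : G => Matrix.GeneralLinearGroup.det (g : GL (Fin 2) (ZMod ℓ)))) :
    (ℓ - 1) * (Nat.card {A : GL (Fin 2) (ZMod ℓ) // A ∈ G ∧
        (Matrix.det ((A : Matrix (Fin 2) (Fin 2) (ZMod ℓ)) - 1) = 0 ∨
         Matrix.det ((A : Matrix (Fin 2) (Fin 2) (ZMod ℓ)) + 1) = 0)}) ^ 2 ≤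
      36 * (Nat.card G) ^ 2 := by
  haveI : Fact ℓ.Prime := ⟨hℓ⟩
  haveI : NeZero ℓ := ⟨hℓ.ne_zero⟩
  -- abbreviations
  have hmono : ∀ g ∈ G, g ∈ diagSubgroup (ZMod ℓ) ∨ IsAnti g := by
    intro g hg
    exact closure_le_mono (hGN hg)
  obtain ⟨g₀, hg₀G, hg₀T⟩ := Set.not_subset.mp hGT
  have hg₀anti : IsAnti g₀ := (hmono g₀ hg₀G).resolve_left hg₀T
  have hg₀inv : IsAnti g₀⁻¹ := anti_inv hg₀anti
  -- the coset trick: product of the coe of g₀ and its inverse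
  have hg0e : (g₀ : Matrix (Fin 2) (Fin 2) (ZMod ℓ)) * ((g₀⁻¹ : GL (Fin 2) (ZMod ℓ)) : Matrix (Fin 2) (Fin 2) (ZMod ℓ)) = 1 := gl_mul_inv_coe g₀
  have e01 : (g₀ : Matrix (Fin 2) (Fin 2) (ZMod ℓ)) 0 1 *
      ((g₀⁻¹ : GL (Fin 2) (ZMod ℓ)) : Matrix (Fin 2) (Fin 2) (ZMod ℓ)) 1 0 = 1 := by
    have := congrArg (fun M => M 0 0) hg0e
    simpa [mul_entry2, hg₀anti.1] using this
  have e10 : (g₀ : Matrix (Fin 2) (Fin 2) (ZMod ℓ)) 1 0 *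
      ((g₀⁻¹ : GL (Fin 2) (ZMod ℓ)) : Matrix (Fin 2) (Fin 2) (ZMod ℓ)) 0 1 = 1 := by
    have := congrArg (fun M => M 1 1) hg0e
    simpa [mul_entry2, hg₀anti.2] using this
  -- conjugation by g₀ swaps the two diagonal entries
  have hi00 : ((g₀ : Matrix (Fin 2) (Fin 2) (ZMod ℓ)))⁻¹ 0 0 = 0 := by
    simpa using hg₀inv.1
  have hi11 : ((g₀ : Matrix (Fin 2) (Fin 2) (ZMod ℓ)))⁻¹ 1 1 = 0 := by
    simpa using hg₀inv.2
  have conj_mem : ∀ h : GL (Fin 2) (ZMod ℓ), h ∈ G ⊓ diagSubgroup (ZMod ℓ) →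
      (g₀ * h * g₀⁻¹) ∈ G ⊓ diagSubgroup (ZMod ℓ) ∧
      ((g₀ * h * g₀⁻¹ : GL (Fin 2) (ZMod ℓ)) : Matrix (Fin 2) (Fin 2) (ZMod ℓ)) 0 0 =
        (h : Matrix (Fin 2) (Fin 2) (ZMod ℓ)) 1 1 ∧
      ((g₀ * h * g₀⁻¹ : GL (Fin 2) (ZMod ℓ)) : Matrix (Fin 2) (Fin 2) (ZMod ℓ)) 1 1 =
        (h : Matrix (Fin 2) (Fin 2) (ZMod ℓ)) 0 0 := by
    intro h hh
    rw [Subgroup.mem_inf] at hh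
    obtain ⟨hhG, hh1, hh2⟩ := hh
    refine ⟨Subgroup.mem_inf.mpr ⟨G.mul_mem (G.mul_mem hg₀G hhG) (G.inv_mem hg₀G), ?_, ?_⟩, ?_, ?_⟩
    · simp [glcoe_mul, mul_entry2, hg₀anti.1, hg₀anti.2, hi00, hi11, hh1, hh2]
    · simp [glcoe_mul, mul_entry2, hg₀anti.1, hg₀anti.2, hi00, hi11, hh1, hh2]
    · have : ((g₀ * h * g₀⁻¹ : GL (Fin 2) (ZMod ℓ)) : Matrix (Fin 2) (Fin 2) (ZMod ℓ)) 0 0 =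
          ((g₀ : Matrix (Fin 2) (Fin 2) (ZMod ℓ)) 0 1 *
            ((g₀⁻¹ : GL (Fin 2) (ZMod ℓ)) : Matrix (Fin 2) (Fin 2) (ZMod ℓ)) 1 0) *
            (h : Matrix (Fin 2) (Fin 2) (ZMod ℓ)) 1 1 := by
        simp [glcoe_mul, mul_entry2, hg₀anti.1, hg₀anti.2, hi00, hi11, hh1, hh2]
        ring
      rw [this, e01, one_mul]
    · have : ((g₀ * h * g₀⁻¹ : GL (Fin 2) (ZMod ℓ)) : Matrix (Fin 2) (Fin 2) (ZMod ℓ)) 1 1 =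
          ((g₀ : Matrix (Fin 2) (Fin 2) (ZMod ℓ)) 1 0 *
            ((g₀⁻¹ : GL (Fin 2) (ZMod ℓ)) : Matrix (Fin 2) (Fin 2) (ZMod ℓ)) 0 1) *
            (h : Matrix (Fin 2) (Fin 2) (ZMod ℓ)) 0 0 := by
        simp [glcoe_mul, mul_entry2, hg₀anti.1, hg₀anti.2, hi00, hi11, hh1, hh2]
        ring
      rw [this, e10, one_mul]
  -- notation for the three homs
  set p0 := torusEntry (ZMod ℓ) G 0 with hp0def
  set p1 := torusEntry (ZMod ℓ) G 1 with hp1def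
  set dH := detOnH (ZMod ℓ) G with hdHdef
  -- the ranges of p0 and p1 agree, and contain the range of dH
  have hswap : ∀ h : ↥(G ⊓ diagSubgroup (ZMod ℓ)), ∃ h' : ↥(G ⊓ diagSubgroup (ZMod ℓ)),
      p0 h' = p1 h ∧ p1 h' = p0 h := by
    intro h
    obtain ⟨hmem, he0, he1⟩ := conj_mem h.1 h.2
    refine ⟨⟨g₀ * h.1 * g₀⁻¹, hmem⟩, Units.ext ?_, Units.ext ?_⟩
    · rw [hp0def, hp1def, torusEntry_val, torusEntry_val]
      exact he0
    · rw [hp0def, hp1def, torusEntry_val, torusEntry_val]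
      exact he1
  have hdet_split : ∀ h : ↥(G ⊓ diagSubgroup (ZMod ℓ)), dH h = p0 h * p1 h := by
    intro h
    apply Units.ext
    rw [hdHdef, detOnH_val, Units.val_mul, hp0def, hp1def, torusEntry_val, torusEntry_val]
    have hh := (Subgroup.mem_inf.mp h.2).2
    rw [mem_diagSubgroup_iff] at hh
    rw [Matrix.det_fin_two, hh.1, hh.2]
    ring
  have hd0 : dH.range ≤ p0.range := by
    rintro x ⟨h, rfl⟩
    rw [hdet_split h]
    obtain ⟨h', h'0, h'1⟩ := hswap h
    exact p0.range.mul_mem ⟨h, rfl⟩ ⟨h', h'0⟩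
  have hd1 : dH.range ≤ p1.range := by
    rintro x ⟨h, rfl⟩
    rw [hdet_split h]
    obtain ⟨h', h'0, h'1⟩ := hswap h
    exact p1.range.mul_mem ⟨h', h'1⟩ ⟨h, rfl⟩
  -- `ℓ - 1 ≤ 2 * |range dH|`
  have hcardunits : Nat.card (ZMod ℓ)ˣ = ℓ - 1 := by
    rw [Nat.card_eq_fintype_card, ZMod.card_units_eq_totient, Nat.totient_prime hℓ]
  have hdet2 : ℓ - 1 ≤ 2 * Nat.card dH.range := by
    have hcover : (Set.univ : Set (ZMod ℓ)ˣ) ⊆ (dH.range : Set (ZMod ℓ)ˣ) ∪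
        (fun x => Matrix.GeneralLinearGroup.det g₀ * x) '' (dH.range : Set (ZMod ℓ)ˣ) := by
      intro c _
      obtain ⟨⟨g, hgG⟩, hgc⟩ := hdet c
      simp only at hgc
      rcases hmono g hgG with hgd | hga
      · left
        exact ⟨⟨g, Subgroup.mem_inf.mpr ⟨hgG, hgd⟩⟩, hgc⟩
      · right
        have hmem : g₀⁻¹ * g ∈ G ⊓ diagSubgroup (ZMod ℓ) := by
          refine Subgroup.mem_inf.mpr ⟨G.mul_mem (G.inv_mem hg₀G) hgG, ?_, ?_⟩ <;>
            simp [glcoe_mul, mul_entry2, hi00, hi11, hga.1, hga.2]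
        refine ⟨dH ⟨g₀⁻¹ * g, hmem⟩, ⟨⟨g₀⁻¹ * g, hmem⟩, rfl⟩, ?_⟩
        have : dH ⟨g₀⁻¹ * g, hmem⟩ =
            (Matrix.GeneralLinearGroup.det g₀)⁻¹ * Matrix.GeneralLinearGroup.det g := by
          rw [hdHdef]
          show Matrix.GeneralLinearGroup.det (g₀⁻¹ * g) = _
          rw [_root_.map_mul, _root_.map_inv]
        rw [this, ← hgc]
        group
    have h1 : Nat.card (ZMod ℓ)ˣ ≤ 2 * Nat.card dH.range := by
      have hA : Nat.card dH.range = (dH.range : Set (ZMod ℓ)ˣ).ncard :=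
        Nat.card_coe_set_eq _
      calc Nat.card (ZMod ℓ)ˣ = (Set.univ : Set (ZMod ℓ)ˣ).ncard := (Set.ncard_univ _).symm
        _ ≤ ((dH.range : Set (ZMod ℓ)ˣ) ∪
            (fun x => Matrix.GeneralLinearGroup.det g₀ * x) '' (dH.range : Set (ZMod ℓ)ˣ)).ncard :=
          Set.ncard_le_ncard hcover (Set.toFinite _)
        _ ≤ (dH.range : Set (ZMod ℓ)ˣ).ncard +
            ((fun x => Matrix.GeneralLinearGroup.det g₀ * x) ''
              (dH.range : Set (ZMod ℓ)ˣ)).ncard := Set.ncard_union_le _ _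
        _ ≤ (dH.range : Set (ZMod ℓ)ˣ).ncard + (dH.range : Set (ZMod ℓ)ˣ).ncard := by
          have := Set.ncard_image_le
            (f := fun x => Matrix.GeneralLinearGroup.det g₀ * x)
            (s := (dH.range : Set (ZMod ℓ)ˣ)) (Set.toFinite _)
          omega
        _ = 2 * Nat.card dH.range := by rw [← hA]; ring
    rw [← hcardunits]
    exact h1
  -- the generic bound for the pieces
  have piece_bound : ∀ (f : ↥(G ⊓ diagSubgroup (ZMod ℓ)) →* (ZMod ℓ)ˣ) (n : ℕ),
      n ≤ Nat.card f.ker → dH.range ≤ f.range →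
      (ℓ - 1) * n ≤ 2 * Nat.card ↥(G ⊓ diagSubgroup (ZMod ℓ)) := by
    intro f n hn hle
    have h1 : (ℓ - 1) * n ≤ (2 * Nat.card f.range) * Nat.card f.ker := by
      apply Nat.mul_le_mul _ hn
      calc ℓ - 1 ≤ 2 * Nat.card dH.range := hdet2
        _ ≤ 2 * Nat.card f.range := by
          gcongr
          exact Subgroup.card_le_of_le hle
    calc (ℓ - 1) * n ≤ (2 * Nat.card f.range) * Nat.card f.ker := h1
      _ = 2 * (Nat.card f.ker * Nat.card f.range) := by ring
      _ = 2 * Nat.card ↥(G ⊓ diagSubgroup (ZMod ℓ)) := by rw [card_ker_mul_card_range]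
  -- index two: `2 * |H| ≤ |G|`
  have h2H : 2 * Nat.card ↥(G ⊓ diagSubgroup (ZMod ℓ)) ≤ Nat.card G := by
    have hinj : Function.Injective
        (Sum.elim (fun h : ↥(G ⊓ diagSubgroup (ZMod ℓ)) =>
            (⟨h.1, (Subgroup.mem_inf.mp h.2).1⟩ : ↥G))
          (fun h : ↥(G ⊓ diagSubgroup (ZMod ℓ)) =>
            (⟨g₀ * h.1, G.mul_mem hg₀G (Subgroup.mem_inf.mp h.2).1⟩ : ↥G))) := by
      rintro (x | x) (y | y) hxy <;> simp only [Sum.elim_inl, Sum.elim_inr, Subtype.mk.injEq] at hxy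
      · exact congrArg Sum.inl (Subtype.ext hxy)
      · exfalso
        apply hg₀T
        have : g₀ = x.1 * (y.1)⁻¹ := by rw [hxy]; group
        rw [this]
        exact (diagSubgroup (ZMod ℓ)).mul_mem (Subgroup.mem_inf.mp x.2).2
          ((diagSubgroup (ZMod ℓ)).inv_mem (Subgroup.mem_inf.mp y.2).2)
      · exfalso
        apply hg₀T
        have : g₀ = y.1 * (x.1)⁻¹ := by rw [← hxy]; group
        rw [this]
        exact (diagSubgroup (ZMod ℓ)).mul_mem (Subgroup.mem_inf.mp y.2).2
          ((diagSubgroup (ZMod ℓ)).inv_mem (Subgroup.mem_inf.mp x.2).2)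
      · exact congrArg Sum.inr (Subtype.ext (mul_left_cancel hxy))
    have := Nat.card_le_card_of_injective _ hinj
    rw [Nat.card_sum] at this
    omega
  -- the five pieces
  set S1 : Set (GL (Fin 2) (ZMod ℓ)) := {A | A ∈ G ⊓ diagSubgroup (ZMod ℓ) ∧
    (A : Matrix (Fin 2) (Fin 2) (ZMod ℓ)) 0 0 = 1} with hS1def
  set S2 : Set (GL (Fin 2) (ZMod ℓ)) := {A | A ∈ G ⊓ diagSubgroup (ZMod ℓ) ∧
    (A : Matrix (Fin 2) (Fin 2) (ZMod ℓ)) 0 0 = -1} with hS2def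
  set S3 : Set (GL (Fin 2) (ZMod ℓ)) := {A | A ∈ G ⊓ diagSubgroup (ZMod ℓ) ∧
    (A : Matrix (Fin 2) (Fin 2) (ZMod ℓ)) 1 1 = 1} with hS3def
  set S4 : Set (GL (Fin 2) (ZMod ℓ)) := {A | A ∈ G ⊓ diagSubgroup (ZMod ℓ) ∧
    (A : Matrix (Fin 2) (Fin 2) (ZMod ℓ)) 1 1 = -1} with hS4def
  set S5 : Set (GL (Fin 2) (ZMod ℓ)) := {A | A ∈ G ∧ IsAnti A ∧
    Matrix.GeneralLinearGroup.det A = (-1 : (ZMod ℓ)ˣ)} with hS5def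
  set M : Set (GL (Fin 2) (ZMod ℓ)) := {A | A ∈ G ∧
    (Matrix.det ((A : Matrix (Fin 2) (Fin 2) (ZMod ℓ)) - 1) = 0 ∨
     Matrix.det ((A : Matrix (Fin 2) (Fin 2) (ZMod ℓ)) + 1) = 0)} with hMdef
  -- the cover
  have hcoverM : M ⊆ S1 ∪ S2 ∪ S3 ∪ S4 ∪ S5 := by
    rintro A ⟨hAG, hAev⟩
    have key : A ∈ S1 ∨ A ∈ S2 ∨ A ∈ S3 ∨ A ∈ S4 ∨ A ∈ S5 := by
      rcases hmono A hAG with hd | ha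
      · obtain ⟨h01, h10⟩ := mem_diagSubgroup_iff.mp hd
        have hmemH : A ∈ G ⊓ diagSubgroup (ZMod ℓ) := Subgroup.mem_inf.mpr ⟨hAG, hd⟩
        rcases hAev with h | h
        · have hdet1 : Matrix.det ((A : Matrix (Fin 2) (Fin 2) (ZMod ℓ)) - 1) =
              ((A : Matrix (Fin 2) (Fin 2) (ZMod ℓ)) 0 0 - 1) *
                ((A : Matrix (Fin 2) (Fin 2) (ZMod ℓ)) 1 1 - 1) := by
            rw [Matrix.det_fin_two]
            simp [Matrix.sub_apply, Matrix.one_fin_two, h01, h10]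
          rw [hdet1] at h
          rcases mul_eq_zero.mp h with h' | h'
          · exact Or.inl ⟨hmemH, sub_eq_zero.mp h'⟩
          · exact Or.inr (Or.inr (Or.inl ⟨hmemH, sub_eq_zero.mp h'⟩))
        · have hdet1 : Matrix.det ((A : Matrix (Fin 2) (Fin 2) (ZMod ℓ)) + 1) =
              ((A : Matrix (Fin 2) (Fin 2) (ZMod ℓ)) 0 0 + 1) *
                ((A : Matrix (Fin 2) (Fin 2) (ZMod ℓ)) 1 1 + 1) := by
            rw [Matrix.det_fin_two]
            simp [Matrix.add_apply, Matrix.one_fin_two, h01, h10]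
          rw [hdet1] at h
          rcases mul_eq_zero.mp h with h' | h'
          · exact Or.inr (Or.inl ⟨hmemH, eq_neg_of_add_eq_zero_left h'⟩)
          · exact Or.inr (Or.inr (Or.inr (Or.inl ⟨hmemH, eq_neg_of_add_eq_zero_left h'⟩)))
      · have hprod : (A : Matrix (Fin 2) (Fin 2) (ZMod ℓ)) 0 1 *
            (A : Matrix (Fin 2) (Fin 2) (ZMod ℓ)) 1 0 = 1 := by
          rcases hAev with h | h
          · have hdet1 : Matrix.det ((A : Matrix (Fin 2) (Fin 2) (ZMod ℓ)) - 1) =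
                1 - (A : Matrix (Fin 2) (Fin 2) (ZMod ℓ)) 0 1 *
                  (A : Matrix (Fin 2) (Fin 2) (ZMod ℓ)) 1 0 := by
              rw [Matrix.det_fin_two]
              simp [Matrix.sub_apply, Matrix.one_fin_two, ha.1, ha.2]
            rw [hdet1] at h
            linear_combination -h
          · have hdet1 : Matrix.det ((A : Matrix (Fin 2) (Fin 2) (ZMod ℓ)) + 1) =
                1 - (A : Matrix (Fin 2) (Fin 2) (ZMod ℓ)) 0 1 *
                  (A : Matrix (Fin 2) (Fin 2) (ZMod ℓ)) 1 0 := by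
              rw [Matrix.det_fin_two]
              simp [Matrix.add_apply, Matrix.one_fin_two, ha.1, ha.2]
            rw [hdet1] at h
            linear_combination -h
        refine Or.inr (Or.inr (Or.inr (Or.inr ⟨hAG, ha, Units.ext ?_⟩)))
        show Matrix.det (A : Matrix (Fin 2) (Fin 2) (ZMod ℓ)) = ((-1 : (ZMod ℓ)ˣ) : ZMod ℓ)
        rw [Units.val_neg, Units.val_one, Matrix.det_fin_two, ha.1, ha.2, hprod]
        ring
    simp only [Set.mem_union]
    tauto
  -- bounds for the pieces
  have bS1 : Nat.card ↥S1 ≤ Nat.card p0.ker := by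
    refine le_trans ?_ (card_fiber_le_card_ker p0 1)
    apply Nat.card_le_card_of_injective
      (fun x : ↥S1 => (⟨⟨x.1, x.2.1⟩, Units.ext x.2.2⟩ :
        {h : ↥(G ⊓ diagSubgroup (ZMod ℓ)) // p0 h = 1}))
    intro x y hxy
    exact Subtype.ext (congrArg (fun z :
      {h : ↥(G ⊓ diagSubgroup (ZMod ℓ)) // p0 h = 1} => z.1.1) hxy)
  have bS2 : Nat.card ↥S2 ≤ Nat.card p0.ker := by
    refine le_trans ?_ (card_fiber_le_card_ker p0 (-1))
    apply Nat.card_le_card_of_injective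
      (fun x : ↥S2 => (⟨⟨x.1, x.2.1⟩, Units.ext (by
        show ((x.1 : GL (Fin 2) (ZMod ℓ)) : Matrix (Fin 2) (Fin 2) (ZMod ℓ)) 0 0 =
          ((-1 : (ZMod ℓ)ˣ) : ZMod ℓ)
        rw [Units.val_neg, Units.val_one]
        exact x.2.2)⟩ :
        {h : ↥(G ⊓ diagSubgroup (ZMod ℓ)) // p0 h = -1}))
    intro x y hxy
    exact Subtype.ext (congrArg (fun z :
      {h : ↥(G ⊓ diagSubgroup (ZMod ℓ)) // p0 h = -1} => z.1.1) hxy)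
  have bS3 : Nat.card ↥S3 ≤ Nat.card p1.ker := by
    refine le_trans ?_ (card_fiber_le_card_ker p1 1)
    apply Nat.card_le_card_of_injective
      (fun x : ↥S3 => (⟨⟨x.1, x.2.1⟩, Units.ext x.2.2⟩ :
        {h : ↥(G ⊓ diagSubgroup (ZMod ℓ)) // p1 h = 1}))
    intro x y hxy
    exact Subtype.ext (congrArg (fun z :
      {h : ↥(G ⊓ diagSubgroup (ZMod ℓ)) // p1 h = 1} => z.1.1) hxy)
  have bS4 : Nat.card ↥S4 ≤ Nat.card p1.ker := by
    refine le_trans ?_ (card_fiber_le_card_ker p1 (-1))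
    apply Nat.card_le_card_of_injective
      (fun x : ↥S4 => (⟨⟨x.1, x.2.1⟩, Units.ext (by
        show ((x.1 : GL (Fin 2) (ZMod ℓ)) : Matrix (Fin 2) (Fin 2) (ZMod ℓ)) 1 1 =
          ((-1 : (ZMod ℓ)ˣ) : ZMod ℓ)
        rw [Units.val_neg, Units.val_one]
        exact x.2.2)⟩ :
        {h : ↥(G ⊓ diagSubgroup (ZMod ℓ)) // p1 h = -1}))
    intro x y hxy
    exact Subtype.ext (congrArg (fun z :
      {h : ↥(G ⊓ diagSubgroup (ZMod ℓ)) // p1 h = -1} => z.1.1) hxy)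
  have bS5 : Nat.card ↥S5 ≤ Nat.card dH.ker := by
    rcases Set.eq_empty_or_nonempty S5 with hS5e | ⟨a₀, ha₀⟩
    · rw [hS5e]
      have : Nat.card (↥(∅ : Set (GL (Fin 2) (ZMod ℓ)))) = 0 := Nat.card_of_isEmpty
      omega
    · obtain ⟨ha₀G, ha₀anti, ha₀det⟩ := ha₀
      have ha₀inv : IsAnti a₀⁻¹ := anti_inv ha₀anti
      have hj00 : ((a₀ : Matrix (Fin 2) (Fin 2) (ZMod ℓ)))⁻¹ 0 0 = 0 := by
        simpa using ha₀inv.1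
      have hj11 : ((a₀ : Matrix (Fin 2) (Fin 2) (ZMod ℓ)))⁻¹ 1 1 = 0 := by
        simpa using ha₀inv.2
      have hmem : ∀ x : ↥S5, a₀⁻¹ * x.1 ∈ G ⊓ diagSubgroup (ZMod ℓ) := by
        intro x
        obtain ⟨hxG, hxa, hxd⟩ := x.2
        refine Subgroup.mem_inf.mpr ⟨G.mul_mem (G.inv_mem ha₀G) hxG, ?_, ?_⟩ <;>
          simp [glcoe_mul, mul_entry2, hj00, hj11, hxa.1, hxa.2]
      have hfib : ∀ x : ↥S5, dH ⟨a₀⁻¹ * x.1, hmem x⟩ = 1 := by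
        intro x
        obtain ⟨hxG, hxa, hxd⟩ := x.2
        have : dH ⟨a₀⁻¹ * x.1, hmem x⟩ =
            (Matrix.GeneralLinearGroup.det a₀)⁻¹ * Matrix.GeneralLinearGroup.det x.1 := by
          rw [hdHdef]
          show Matrix.GeneralLinearGroup.det (a₀⁻¹ * x.1) = _
          rw [_root_.map_mul, _root_.map_inv]
        rw [this, ha₀det, hxd]
        group
      refine le_trans ?_ (card_fiber_le_card_ker dH 1)
      apply Nat.card_le_card_of_injective
        (fun x : ↥S5 => (⟨⟨a₀⁻¹ * x.1, hmem x⟩, hfib x⟩ :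
          {h : ↥(G ⊓ diagSubgroup (ZMod ℓ)) // dH h = 1}))
      intro x y hxy
      have := congrArg (fun z :
        {h : ↥(G ⊓ diagSubgroup (ZMod ℓ)) // dH h = 1} => z.1.1) hxy
      simp only at this
      exact Subtype.ext (mul_left_cancel this)
  -- the five piece bounds
  have c1 := piece_bound p0 _ bS1 hd0
  have c2 := piece_bound p0 _ bS2 hd0
  have c3 := piece_bound p1 _ bS3 hd1
  have c4 := piece_bound p1 _ bS4 hd1
  have c5 := piece_bound dH _ bS5 le_rfl
  -- total count
  have hMtot : Nat.card ↥M ≤ Nat.card ↥S1 + Nat.card ↥S2 + Nat.card ↥S3 +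
      Nat.card ↥S4 + Nat.card ↥S5 := by
    have e1 : Nat.card ↥S1 = S1.ncard := Nat.card_coe_set_eq _
    have e2 : Nat.card ↥S2 = S2.ncard := Nat.card_coe_set_eq _
    have e3 : Nat.card ↥S3 = S3.ncard := Nat.card_coe_set_eq _
    have e4 : Nat.card ↥S4 = S4.ncard := Nat.card_coe_set_eq _
    have e5 : Nat.card ↥S5 = S5.ncard := Nat.card_coe_set_eq _
    have eM : Nat.card ↥M = M.ncard := Nat.card_coe_set_eq _
    have u1 : M.ncard ≤ (S1 ∪ S2 ∪ S3 ∪ S4 ∪ S5).ncard :=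
      Set.ncard_le_ncard hcoverM (Set.toFinite _)
    have u2 : (S1 ∪ S2 ∪ S3 ∪ S4 ∪ S5).ncard ≤ (S1 ∪ S2 ∪ S3 ∪ S4).ncard + S5.ncard :=
      Set.ncard_union_le _ _
    have u3 : (S1 ∪ S2 ∪ S3 ∪ S4).ncard ≤ (S1 ∪ S2 ∪ S3).ncard + S4.ncard :=
      Set.ncard_union_le _ _
    have u4 : (S1 ∪ S2 ∪ S3).ncard ≤ (S1 ∪ S2).ncard + S3.ncard :=
      Set.ncard_union_le _ _
    have u5 : (S1 ∪ S2).ncard ≤ S1.ncard + S2.ncard :=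
      Set.ncard_union_le _ _
    omega
  -- the key linear bound
  have key : (ℓ - 1) * Nat.card ↥M ≤ 5 * Nat.card G := by
    calc (ℓ - 1) * Nat.card ↥M
        ≤ (ℓ - 1) * (Nat.card ↥S1 + Nat.card ↥S2 + Nat.card ↥S3 +
            Nat.card ↥S4 + Nat.card ↥S5) := Nat.mul_le_mul_left _ hMtot
      _ = (ℓ - 1) * Nat.card ↥S1 + (ℓ - 1) * Nat.card ↥S2 + (ℓ - 1) * Nat.card ↥S3 +
            (ℓ - 1) * Nat.card ↥S4 + (ℓ - 1) * Nat.card ↥S5 := by ring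
      _ ≤ 2 * Nat.card ↥(G ⊓ diagSubgroup (ZMod ℓ)) + 2 * Nat.card ↥(G ⊓ diagSubgroup (ZMod ℓ)) +
            2 * Nat.card ↥(G ⊓ diagSubgroup (ZMod ℓ)) + 2 * Nat.card ↥(G ⊓ diagSubgroup (ZMod ℓ)) +
            2 * Nat.card ↥(G ⊓ diagSubgroup (ZMod ℓ)) :=
        add_le_add (add_le_add (add_le_add (add_le_add c1 c2) c3) c4) c5
      _ = 5 * (2 * Nat.card ↥(G ⊓ diagSubgroup (ZMod ℓ))) := by ring
      _ ≤ 5 * Nat.card G := Nat.mul_le_mul_left _ h2H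
  have hMG : Nat.card ↥M ≤ Nat.card G :=
    Nat.card_le_card_of_injective (fun x : ↥M => (⟨x.1, x.2.1⟩ : ↥G))
      (fun x y h => Subtype.ext (congrArg (fun z : ↥G => z.1) h))
  -- conclusion
  have hMcard : Nat.card {A : GL (Fin 2) (ZMod ℓ) // A ∈ G ∧
      (Matrix.det ((A : Matrix (Fin 2) (Fin 2) (ZMod ℓ)) - 1) = 0 ∨
       Matrix.det ((A : Matrix (Fin 2) (Fin 2) (ZMod ℓ)) + 1) = 0)} = Nat.card ↥M := rfl
  rw [hMcard]
  have hmm := Nat.mul_le_mul key hMG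
  calc (ℓ - 1) * Nat.card ↥M ^ 2 = ((ℓ - 1) * Nat.card ↥M) * Nat.card ↥M := by ring
    _ ≤ (5 * Nat.card G) * Nat.card G := hmm
    _ = 5 * Nat.card G ^ 2 := by ring
    _ ≤ 36 * Nat.card G ^ 2 := Nat.mul_le_mul_right _ (by norm_num)
end

section
/- Let ℓ be a prime and let U be a nontrivial unipotent subgroup of GL₂(ℤ_ℓ). Then the common fixed module L_U := {v ∈ ℤ_ℓ² : Av = v for all A ∈ U} is a line in ℤ_ℓ² (i.e. a free rank-1 submodule with torsion-free quotient), the subgroup U(L_U) is unipotent and contains U, and U(L_U) is the unique maximal unipotent subgroup of GL₂(ℤ_ℓ) containing U. -/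
open Matrix
open scoped MatrixGroups

variable (ℓ : ℕ) [Fact ℓ.Prime]

/-- A matrix `A ∈ GL₂(ℤ_ℓ)` is unipotent if `(A − 1)² = 0`. -/
def IsUnipotentElt (A : GL (Fin 2) ℤ_[ℓ]) : Prop :=
  ((A : Matrix (Fin 2) (Fin 2) ℤ_[ℓ]) - 1) ^ 2 = 0

/-- A subgroup of `GL₂(ℤ_ℓ)` is unipotent if all its elements are unipotent. -/
def IsUnipotentSubgroup (U : Subgroup (GL (Fin 2) ℤ_[ℓ])) : Prop :=
  ∀ A ∈ U, IsUnipotentElt ℓ A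

/-- A maximal unipotent subgroup is a unipotent subgroup maximal w.r.t. inclusion
among unipotent subgroups. -/
def IsMaxUnipotentSubgroup (U : Subgroup (GL (Fin 2) ℤ_[ℓ])) : Prop :=
  IsUnipotentSubgroup ℓ U ∧
    ∀ V : Subgroup (GL (Fin 2) ℤ_[ℓ]), IsUnipotentSubgroup ℓ V → U ≤ V → V = U

/-- A line in `ℤ_ℓ²`: a free rank-1 submodule with torsion-free quotient. -/
def IsLine (L : Submodule ℤ_[ℓ] (Fin 2 → ℤ_[ℓ])) : Prop :=
  Module.Free ℤ_[ℓ] L ∧ Module.rank ℤ_[ℓ] L = 1 ∧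
    NoZeroSMulDivisors ℤ_[ℓ] ((Fin 2 → ℤ_[ℓ]) ⧸ L)

/-- The common fixed module `L_U = {v : A v = v for all A ∈ U}` of a set of matrices. -/
noncomputable def fixedSubmodule (U : Subgroup (GL (Fin 2) ℤ_[ℓ])) : Submodule ℤ_[ℓ] (Fin 2 → ℤ_[ℓ]) where
  carrier := {v | ∀ A ∈ U, (A : Matrix (Fin 2) (Fin 2) ℤ_[ℓ]) *ᵥ v = v}
  add_mem' := by
    intro a b ha hb A hA
    rw [Matrix.mulVec_add, ha A hA, hb A hA]
  zero_mem' := by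
    intro A hA
    rw [Matrix.mulVec_zero]
  smul_mem' := by
    intro c a ha A hA
    rw [Matrix.mulVec_smul, ha A hA]

/-- `U(L) = {A ∈ GL₂(ℤ_ℓ) : det A = 1 and A fixes L pointwise}`. -/
noncomputable def lineFixer (L : Submodule ℤ_[ℓ] (Fin 2 → ℤ_[ℓ])) : Subgroup (GL (Fin 2) ℤ_[ℓ]) where
  carrier := {A | Matrix.det (A : Matrix (Fin 2) (Fin 2) ℤ_[ℓ]) = 1 ∧
      ∀ v ∈ L, (A : Matrix (Fin 2) (Fin 2) ℤ_[ℓ]) *ᵥ v = v}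
  one_mem' := by
    refine ⟨by simp, fun v hv => by simp⟩
  mul_mem' := by
    rintro A B ⟨hA1, hA2⟩ ⟨hB1, hB2⟩
    refine ⟨?_, fun v hv => ?_⟩
    · show Matrix.det ((A * B : GL (Fin 2) ℤ_[ℓ]) : Matrix (Fin 2) (Fin 2) ℤ_[ℓ]) = 1
      rw [Units.val_mul, Matrix.det_mul, hA1, hB1, mul_one]
    · show ((A * B : GL (Fin 2) ℤ_[ℓ]) : Matrix (Fin 2) (Fin 2) ℤ_[ℓ]) *ᵥ v = v
      rw [Units.val_mul, ← Matrix.mulVec_mulVec, hB2 v hv, hA2 v hv]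
  inv_mem' := by
    rintro A ⟨hA1, hA2⟩
    have h : ((A⁻¹ : GL (Fin 2) ℤ_[ℓ]) : Matrix (Fin 2) (Fin 2) ℤ_[ℓ]) *
        (A : Matrix (Fin 2) (Fin 2) ℤ_[ℓ]) = 1 := by
      rw [← Units.val_mul, inv_mul_cancel, Units.val_one]
    refine ⟨?_, fun v hv => ?_⟩
    · have hd := congrArg Matrix.det h
      rw [Matrix.det_mul, hA1, mul_one, Matrix.det_one] at hd
      exact hd
    · conv_lhs => rw [← hA2 v hv]
      rw [Matrix.mulVec_mulVec, h, Matrix.one_mulVec]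

namespace UnipAux

variable {ℓ : ℕ} [Fact ℓ.Prime]

/-- 2×2 square-zero criterion. -/
lemma sq_zero_iff (N : Matrix (Fin 2) (Fin 2) ℤ_[ℓ]) :
    N ^ 2 = 0 ↔ N 1 1 = -N 0 0 ∧ N 0 0 * N 0 0 + N 0 1 * N 1 0 = 0 := by
  constructor
  · intro h
    have e00 := congrFun (congrFun h 0) 0
    have e01 := congrFun (congrFun h 0) 1
    have e10 := congrFun (congrFun h 1) 0
    have e11 := congrFun (congrFun h 1) 1
    simp only [pow_two, Matrix.mul_apply, Fin.sum_univ_two, Matrix.zero_apply] at e00 e01 e10 e11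
    by_cases hs : N 0 0 + N 1 1 = 0
    · refine ⟨by linear_combination hs, by linear_combination e00⟩
    · exfalso
      have hb : N 0 1 = 0 := by
        rcases mul_eq_zero.mp (show N 0 1 * (N 0 0 + N 1 1) = 0 by linear_combination e01) with h' | h'
        · exact h'
        · exact absurd h' hs
      have hc : N 1 0 = 0 := by
        rcases mul_eq_zero.mp (show N 1 0 * (N 0 0 + N 1 1) = 0 by linear_combination e10) with h' | h'
        · exact h'
        · exact absurd h' hs
      have ha : N 0 0 = 0 := by
        have h2 : N 0 0 ^ 2 = 0 := by rw [pow_two]; linear_combination e00 - N 0 1 * hc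
        exact pow_eq_zero_iff (two_ne_zero) |>.mp h2
      have hd : N 1 1 = 0 := by
        have h2 : N 1 1 ^ 2 = 0 := by rw [pow_two]; linear_combination e11 - N 0 1 * hc
        exact pow_eq_zero_iff (two_ne_zero) |>.mp h2
      exact hs (by rw [ha, hd, add_zero])
  · rintro ⟨h1, h2⟩
    ext i j
    fin_cases i <;> fin_cases j <;>
      simp only [Fin.mk_zero, Fin.mk_one, pow_two, Matrix.mul_apply, Fin.sum_univ_two,
        Matrix.zero_apply, Fin.isValue]
    · linear_combination h2
    · linear_combination N 0 1 * h1
    · linear_combination N 1 0 * h1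
    · linear_combination h2 + (N 1 1 - N 0 0) * h1

/-- Entry form of unipotency. -/
lemma unip_iff (A : GL (Fin 2) ℤ_[ℓ]) :
    IsUnipotentElt ℓ A ↔
      (A : Matrix (Fin 2) (Fin 2) ℤ_[ℓ]) 1 1 - 1 =
        -((A : Matrix (Fin 2) (Fin 2) ℤ_[ℓ]) 0 0 - 1) ∧
      ((A : Matrix (Fin 2) (Fin 2) ℤ_[ℓ]) 0 0 - 1) *
          ((A : Matrix (Fin 2) (Fin 2) ℤ_[ℓ]) 0 0 - 1) +
        (A : Matrix (Fin 2) (Fin 2) ℤ_[ℓ]) 0 1 *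
          (A : Matrix (Fin 2) (Fin 2) ℤ_[ℓ]) 1 0 = 0 := by
  have h := sq_zero_iff ((A : Matrix (Fin 2) (Fin 2) ℤ_[ℓ]) - 1)
  simpa [IsUnipotentElt, Matrix.sub_apply, Matrix.one_apply] using h

lemma det_eq_one_of_unip (A : GL (Fin 2) ℤ_[ℓ]) (h : IsUnipotentElt ℓ A) :
    Matrix.det (A : Matrix (Fin 2) (Fin 2) ℤ_[ℓ]) = 1 := by
  obtain ⟨h1, h2⟩ := (unip_iff A).mp h
  rw [Matrix.det_fin_two]
  linear_combination (A : Matrix (Fin 2) (Fin 2) ℤ_[ℓ]) 0 0 * h1 - h2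

end UnipAux
namespace UnipAux

variable {ℓ : ℕ} [Fact ℓ.Prime]

lemma case1_core (a r p q p' q' r' : ℤ_[ℓ]) (hr : r ≠ 0) (hp : p = r * a)
    (hq : q = -(r * a ^ 2)) (hBd : p' * p' + q' * r' = 0)
    (htr : 2 * p * p' + q * r' + r * q' = 0) :
    p' * a + q' = 0 ∧ r' * a - p' = 0 := by
  subst hp hq
  have he : 2 * a * p' - a ^ 2 * r' + q' = 0 := by
    have h0 : r * (2 * a * p' - a ^ 2 * r' + q') = 0 := by linear_combination htr
    exact (mul_eq_zero.mp h0).resolve_left hr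
  have ht : r' * a - p' = 0 := by
    have h2 : (r' * a - p') ^ 2 = 0 := by linear_combination (-r') * he + hBd
    exact pow_eq_zero_iff two_ne_zero |>.mp h2
  exact ⟨by linear_combination a * ht + he, ht⟩

lemma case2_core (b q p r p' q' r' : ℤ_[ℓ]) (hqne : q ≠ 0) (hp : p = -(q * b))
    (hr : r = -(q * b ^ 2)) (hBd : p' * p' + q' * r' = 0)
    (htr : 2 * p * p' + q * r' + r * q' = 0) :
    p' + q' * b = 0 ∧ r' - p' * b = 0 := by
  subst hp hr
  have he : -2 * b * p' + r' - b ^ 2 * q' = 0 := by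
    have h0 : q * (-2 * b * p' + r' - b ^ 2 * q') = 0 := by linear_combination htr
    exact (mul_eq_zero.mp h0).resolve_left hqne
  have hs : p' + q' * b = 0 := by
    have h2 : (p' + q' * b) ^ 2 = 0 := by linear_combination (-q') * he + hBd
    exact pow_eq_zero_iff two_ne_zero |>.mp h2
  exact ⟨hs, by linear_combination he + b * hs⟩

/-- Helper: a span of a vector with a unit coordinate cut out by a surjective functional is a line. -/
lemma isLine_of (v : Fin 2 → ℤ_[ℓ]) (φ : (Fin 2 → ℤ_[ℓ]) →ₗ[ℤ_[ℓ]] ℤ_[ℓ])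
    (hker : LinearMap.ker φ = Submodule.span ℤ_[ℓ] {v})
    (i : Fin 2) (hvi : v i = 1) :
    IsLine ℓ (Submodule.span ℤ_[ℓ] {v}) := by
  have hinj : Function.Injective (LinearMap.toSpanSingleton ℤ_[ℓ] (Fin 2 → ℤ_[ℓ]) v) := by
    intro x y hxy
    have h := congrFun hxy i
    simpa [LinearMap.toSpanSingleton_apply, hvi] using h
  have e1 : ℤ_[ℓ] ≃ₗ[ℤ_[ℓ]] Submodule.span ℤ_[ℓ] {v} :=
    (LinearEquiv.ofInjective _ hinj).trans
      (LinearEquiv.ofEq _ _ (LinearMap.span_singleton_eq_range ℤ_[ℓ] _ v).symm)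
  refine ⟨Module.Free.of_equiv e1, ?_, ?_⟩
  · rw [← e1.rank_eq, Module.rank_self]
  · set ψ := Submodule.liftQ _ φ hker.ge with hψ
    have hinjψ : Function.Injective ψ := by
      rw [← LinearMap.ker_eq_bot]
      exact Submodule.ker_liftQ_eq_bot _ _ _ hker.le
    constructor
    intro c x hcx
    rcases eq_or_ne c 0 with h | h
    · exact Or.inl h
    · refine Or.inr ?_
      have h0 : ψ (c • x) = 0 := by rw [hcx, map_zero]
      rw [_root_.map_smul, smul_eq_mul] at h0
      have hx : ψ x = 0 := (mul_eq_zero.mp h0).resolve_left h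
      have : ψ x = ψ 0 := by simpa using hx
      exact hinjψ this

/-- The linear functional `w ↦ c0 * w 0 + c1 * w 1`. -/
noncomputable def lfun (c0 c1 : ℤ_[ℓ]) : (Fin 2 → ℤ_[ℓ]) →ₗ[ℤ_[ℓ]] ℤ_[ℓ] where
  toFun w := c0 * w 0 + c1 * w 1
  map_add' x y := by simp only [Pi.add_apply]; ring
  map_smul' c x := by simp only [Pi.smul_apply, smul_eq_mul, RingHom.id_apply]; ring

lemma mem_span_col (a : ℤ_[ℓ]) (w : Fin 2 → ℤ_[ℓ]) :
    w ∈ Submodule.span ℤ_[ℓ] {![a, 1]} ↔ w 0 = a * w 1 := by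
  rw [Submodule.mem_span_singleton]
  constructor
  · rintro ⟨c, rfl⟩; simp [mul_comm]
  · intro h
    refine ⟨w 1, funext fun i => ?_⟩
    fin_cases i <;> simp [h, mul_comm]

lemma mem_span_row (b : ℤ_[ℓ]) (w : Fin 2 → ℤ_[ℓ]) :
    w ∈ Submodule.span ℤ_[ℓ] {![1, b]} ↔ w 1 = b * w 0 := by
  rw [Submodule.mem_span_singleton]
  constructor
  · rintro ⟨c, rfl⟩; simp [mul_comm]
  · intro h
    refine ⟨w 0, funext fun i => ?_⟩
    fin_cases i <;> simp [h, mul_comm]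

lemma ker_lfun_col (a : ℤ_[ℓ]) :
    LinearMap.ker (lfun (1 : ℤ_[ℓ]) (-a)) = Submodule.span ℤ_[ℓ] {![a, 1]} := by
  ext w
  rw [LinearMap.mem_ker, mem_span_col]
  show 1 * w 0 + -a * w 1 = 0 ↔ _
  constructor <;> intro h <;> linear_combination h

lemma ker_lfun_row (b : ℤ_[ℓ]) :
    LinearMap.ker (lfun (-b) (1 : ℤ_[ℓ])) = Submodule.span ℤ_[ℓ] {![1, b]} := by
  ext w
  rw [LinearMap.mem_ker, mem_span_row]
  show -b * w 0 + 1 * w 1 = 0 ↔ _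
  constructor <;> intro h <;> linear_combination h

lemma isLine_col (a : ℤ_[ℓ]) : IsLine ℓ (Submodule.span ℤ_[ℓ] {![a, 1]}) :=
  isLine_of _ _ (ker_lfun_col a) 1 (by simp)

lemma isLine_row (b : ℤ_[ℓ]) : IsLine ℓ (Submodule.span ℤ_[ℓ] {![1, b]}) :=
  isLine_of _ _ (ker_lfun_row b) 0 (by simp)

lemma exists_line_vec (A₀ : GL (Fin 2) ℤ_[ℓ]) (h1 : IsUnipotentElt ℓ A₀) (hne : A₀ ≠ 1) :
    ∃ v : Fin 2 → ℤ_[ℓ],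
      IsLine ℓ (Submodule.span ℤ_[ℓ] {v}) ∧
      (∀ B : GL (Fin 2) ℤ_[ℓ], IsUnipotentElt ℓ B → IsUnipotentElt ℓ (A₀ * B) →
        (B : Matrix (Fin 2) (Fin 2) ℤ_[ℓ]) *ᵥ v = v) ∧
      (∀ w : Fin 2 → ℤ_[ℓ], (A₀ : Matrix (Fin 2) (Fin 2) ℤ_[ℓ]) *ᵥ w = w →
        w ∈ Submodule.span ℤ_[ℓ] {v}) ∧
      (∀ B : GL (Fin 2) ℤ_[ℓ], Matrix.det (B : Matrix (Fin 2) (Fin 2) ℤ_[ℓ]) = 1 →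
        (B : Matrix (Fin 2) (Fin 2) ℤ_[ℓ]) *ᵥ v = v → IsUnipotentElt ℓ B) := by
  obtain ⟨hA1, hA2⟩ := (unip_iff A₀).mp h1
  have hN0 : ¬((A₀ : Matrix (Fin 2) (Fin 2) ℤ_[ℓ]) 0 0 - 1 = 0 ∧
      (A₀ : Matrix (Fin 2) (Fin 2) ℤ_[ℓ]) 0 1 = 0 ∧
      (A₀ : Matrix (Fin 2) (Fin 2) ℤ_[ℓ]) 1 0 = 0) := by
    rintro ⟨hp, hq, hr⟩
    apply hne
    apply Units.ext
    show (A₀ : Matrix (Fin 2) (Fin 2) ℤ_[ℓ]) = 1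
    ext i j
    fin_cases i <;> fin_cases j <;>
      simp only [Fin.mk_zero, Fin.mk_one, Matrix.one_apply_eq, Matrix.one_apply_ne,
        Fin.isValue, ne_eq, zero_ne_one, not_false_eq_true, one_ne_zero]
    · linear_combination hp
    · linear_combination hq
    · linear_combination hr
    · linear_combination hA1 - hp
  -- dichotomy
  have hdich : (∃ a : ℤ_[ℓ], (A₀ : Matrix (Fin 2) (Fin 2) ℤ_[ℓ]) 1 0 ≠ 0 ∧
      (A₀ : Matrix (Fin 2) (Fin 2) ℤ_[ℓ]) 0 0 - 1 = (A₀ : Matrix (Fin 2) (Fin 2) ℤ_[ℓ]) 1 0 * a ∧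
      (A₀ : Matrix (Fin 2) (Fin 2) ℤ_[ℓ]) 0 1 = -((A₀ : Matrix (Fin 2) (Fin 2) ℤ_[ℓ]) 1 0 * a ^ 2)) ∨
      (∃ b : ℤ_[ℓ], (A₀ : Matrix (Fin 2) (Fin 2) ℤ_[ℓ]) 0 1 ≠ 0 ∧
      (A₀ : Matrix (Fin 2) (Fin 2) ℤ_[ℓ]) 0 0 - 1 = -((A₀ : Matrix (Fin 2) (Fin 2) ℤ_[ℓ]) 0 1 * b) ∧
      (A₀ : Matrix (Fin 2) (Fin 2) ℤ_[ℓ]) 1 0 = -((A₀ : Matrix (Fin 2) (Fin 2) ℤ_[ℓ]) 0 1 * b ^ 2)) := by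
    set p := (A₀ : Matrix (Fin 2) (Fin 2) ℤ_[ℓ]) 0 0 - 1 with hpdef
    set q := (A₀ : Matrix (Fin 2) (Fin 2) ℤ_[ℓ]) 0 1 with hqdef
    set r := (A₀ : Matrix (Fin 2) (Fin 2) ℤ_[ℓ]) 1 0 with hrdef
    clear_value p q r
    rcases ValuationRing.dvd_total r p with ⟨a, ha⟩ | ⟨m, hm⟩
    · by_cases hr0 : r = 0
      · have hp0 : p = 0 := by
          have : p ^ 2 = 0 := by rw [pow_two]; linear_combination hA2 - q * hr0
          exact pow_eq_zero_iff two_ne_zero |>.mp this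
        have hq0 : q ≠ 0 := fun hq0 => hN0 ⟨hp0, hq0, hr0⟩
        exact Or.inr ⟨0, hq0, by rw [hp0]; ring, by rw [hr0]; ring⟩
      · refine Or.inl ⟨a, hr0, ha, ?_⟩
        have h0 : r * (q + r * a ^ 2) = 0 := by linear_combination hA2 - (p + r * a) * ha
        have := (mul_eq_zero.mp h0).resolve_left hr0
        linear_combination this
    · by_cases hp0 : p = 0
      · have hr0 : r = 0 := by
          have hqr : q * r = 0 := by linear_combination hA2 - p * hp0
          rcases mul_eq_zero.mp hqr with h | h
          · exact absurd ⟨hp0, h, by rw [hm, hp0, zero_mul]⟩ hN0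
          · exact h
        have hq0 : q ≠ 0 := fun hq0 => hN0 ⟨hp0, hq0, hr0⟩
        exact Or.inr ⟨0, hq0, by rw [hp0]; ring, by rw [hr0]; ring⟩
      · have h0 : p * (p + q * m) = 0 := by linear_combination hA2 - q * hm
        have hpm : p + q * m = 0 := (mul_eq_zero.mp h0).resolve_left hp0
        have hq0 : q ≠ 0 := by
          rintro rfl
          exact hp0 (by linear_combination hpm)
        refine Or.inr ⟨m, hq0, by linear_combination hpm, ?_⟩
        rw [hm]
        have hp' : p = -(q * m) := by linear_combination hpm
        rw [hp']; ring
  rcases hdich with ⟨a, hr0, hp, hq⟩ | ⟨b, hq0, hp, hr⟩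
  · refine ⟨![a, 1], isLine_col a, ?_, ?_, ?_⟩
    · intro B hB hAB
      obtain ⟨hB1, hB2⟩ := (unip_iff B).mp hB
      obtain ⟨hAB1, -⟩ := (unip_iff (A₀ * B)).mp hAB
      rw [Units.val_mul] at hAB1
      simp only [Matrix.mul_apply, Fin.sum_univ_two] at hAB1
      have htr : 2 * ((A₀ : Matrix (Fin 2) (Fin 2) ℤ_[ℓ]) 0 0 - 1) *
            ((B : Matrix (Fin 2) (Fin 2) ℤ_[ℓ]) 0 0 - 1) +
          (A₀ : Matrix (Fin 2) (Fin 2) ℤ_[ℓ]) 0 1 * (B : Matrix (Fin 2) (Fin 2) ℤ_[ℓ]) 1 0 +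
          (A₀ : Matrix (Fin 2) (Fin 2) ℤ_[ℓ]) 1 0 * (B : Matrix (Fin 2) (Fin 2) ℤ_[ℓ]) 0 1 = 0 := by
        linear_combination hAB1 - (B : Matrix (Fin 2) (Fin 2) ℤ_[ℓ]) 1 1 * hA1 +
          ((A₀ : Matrix (Fin 2) (Fin 2) ℤ_[ℓ]) 0 0 - 2) * hB1
      obtain ⟨hc1, hc2⟩ := case1_core a _ _ _ _ _ _ hr0 hp hq hB2 htr
      funext i
      fin_cases i <;>
        simp only [Fin.mk_zero, Fin.mk_one, Matrix.mulVec, dotProduct, Fin.sum_univ_two,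
          Matrix.cons_val_zero, Matrix.cons_val_one, Matrix.head_cons, Fin.isValue]
      · linear_combination hc1
      · linear_combination hc2 + hB1
    · intro w hw
      have h0 := congrFun hw 1
      simp only [Matrix.mulVec, dotProduct, Fin.sum_univ_two] at h0
      rw [mem_span_col]
      have hz : (A₀ : Matrix (Fin 2) (Fin 2) ℤ_[ℓ]) 1 0 * (w 0 - a * w 1) = 0 := by
        linear_combination h0 - w 1 * hA1 + w 1 * hp
      exact sub_eq_zero.mp ((mul_eq_zero.mp hz).resolve_left hr0)
    · intro B hdet hfixv
      have e1 := congrFun hfixv 0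
      have e2 := congrFun hfixv 1
      simp only [Matrix.mulVec, dotProduct, Fin.sum_univ_two, Matrix.cons_val_zero,
        Matrix.cons_val_one, Matrix.head_cons] at e1 e2
      rw [Matrix.det_fin_two] at hdet
      have f : (B : Matrix (Fin 2) (Fin 2) ℤ_[ℓ]) 0 0 -
          a * (B : Matrix (Fin 2) (Fin 2) ℤ_[ℓ]) 1 0 - 1 = 0 := by
        linear_combination hdet + (B : Matrix (Fin 2) (Fin 2) ℤ_[ℓ]) 1 0 * e1 -
          (B : Matrix (Fin 2) (Fin 2) ℤ_[ℓ]) 0 0 * e2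
      refine (unip_iff B).mpr ⟨?_, ?_⟩
      · linear_combination f + e2
      · linear_combination (B : Matrix (Fin 2) (Fin 2) ℤ_[ℓ]) 1 0 * e1 +
          ((B : Matrix (Fin 2) (Fin 2) ℤ_[ℓ]) 0 0 - 1) * f
  · refine ⟨![1, b], isLine_row b, ?_, ?_, ?_⟩
    · intro B hB hAB
      obtain ⟨hB1, hB2⟩ := (unip_iff B).mp hB
      obtain ⟨hAB1, -⟩ := (unip_iff (A₀ * B)).mp hAB
      rw [Units.val_mul] at hAB1
      simp only [Matrix.mul_apply, Fin.sum_univ_two] at hAB1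
      have htr : 2 * ((A₀ : Matrix (Fin 2) (Fin 2) ℤ_[ℓ]) 0 0 - 1) *
            ((B : Matrix (Fin 2) (Fin 2) ℤ_[ℓ]) 0 0 - 1) +
          (A₀ : Matrix (Fin 2) (Fin 2) ℤ_[ℓ]) 0 1 * (B : Matrix (Fin 2) (Fin 2) ℤ_[ℓ]) 1 0 +
          (A₀ : Matrix (Fin 2) (Fin 2) ℤ_[ℓ]) 1 0 * (B : Matrix (Fin 2) (Fin 2) ℤ_[ℓ]) 0 1 = 0 := by
        linear_combination hAB1 - (B : Matrix (Fin 2) (Fin 2) ℤ_[ℓ]) 1 1 * hA1 +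
          ((A₀ : Matrix (Fin 2) (Fin 2) ℤ_[ℓ]) 0 0 - 2) * hB1
      obtain ⟨hc1, hc2⟩ := case2_core b _ _ _ _ _ _ hq0 hp hr hB2 htr
      funext i
      fin_cases i <;>
        simp only [Fin.mk_zero, Fin.mk_one, Matrix.mulVec, dotProduct, Fin.sum_univ_two,
          Matrix.cons_val_zero, Matrix.cons_val_one, Matrix.head_cons, Fin.isValue]
      · linear_combination hc1
      · linear_combination hc2 + b * hB1
    · intro w hw
      have h0 := congrFun hw 0
      simp only [Matrix.mulVec, dotProduct, Fin.sum_univ_two] at h0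
      rw [mem_span_row]
      have hz : (A₀ : Matrix (Fin 2) (Fin 2) ℤ_[ℓ]) 0 1 * (w 1 - b * w 0) = 0 := by
        linear_combination h0 - w 0 * hp
      exact sub_eq_zero.mp ((mul_eq_zero.mp hz).resolve_left hq0)
    · intro B hdet hfixv
      have e1 := congrFun hfixv 0
      have e2 := congrFun hfixv 1
      simp only [Matrix.mulVec, dotProduct, Fin.sum_univ_two, Matrix.cons_val_zero,
        Matrix.cons_val_one, Matrix.head_cons] at e1 e2
      rw [Matrix.det_fin_two] at hdet
      have f : (B : Matrix (Fin 2) (Fin 2) ℤ_[ℓ]) 1 1 -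
          b * (B : Matrix (Fin 2) (Fin 2) ℤ_[ℓ]) 0 1 - 1 = 0 := by
        linear_combination hdet + (B : Matrix (Fin 2) (Fin 2) ℤ_[ℓ]) 0 1 * e2 -
          (B : Matrix (Fin 2) (Fin 2) ℤ_[ℓ]) 1 1 * e1
      refine (unip_iff B).mpr ⟨?_, ?_⟩
      · linear_combination f + e1
      · linear_combination ((B : Matrix (Fin 2) (Fin 2) ℤ_[ℓ]) 0 0 - 1 -
            b * (B : Matrix (Fin 2) (Fin 2) ℤ_[ℓ]) 0 1) * e1 +
          (B : Matrix (Fin 2) (Fin 2) ℤ_[ℓ]) 0 1 * e2 -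
          b * (B : Matrix (Fin 2) (Fin 2) ℤ_[ℓ]) 0 1 * f

lemma mem_fixedSubmodule {U : Subgroup (GL (Fin 2) ℤ_[ℓ])} {w : Fin 2 → ℤ_[ℓ]} :
    w ∈ fixedSubmodule ℓ U ↔
      ∀ A ∈ U, (A : Matrix (Fin 2) (Fin 2) ℤ_[ℓ]) *ᵥ w = w := Iff.rfl

lemma mem_lineFixer {L : Submodule ℤ_[ℓ] (Fin 2 → ℤ_[ℓ])} {A : GL (Fin 2) ℤ_[ℓ]} :
    A ∈ lineFixer ℓ L ↔ Matrix.det (A : Matrix (Fin 2) (Fin 2) ℤ_[ℓ]) = 1 ∧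
      ∀ v ∈ L, (A : Matrix (Fin 2) (Fin 2) ℤ_[ℓ]) *ᵥ v = v := Iff.rfl

end UnipAux

/-- Let `U` be a nontrivial unipotent subgroup of `GL₂(ℤ_ℓ)`.
Then the common fixed module `L_U` is a line in `ℤ_ℓ²`, the subgroup `U(L_U)` is
unipotent and contains `U`, and `U(L_U)` is the unique maximal unipotent subgroup
of `GL₂(ℤ_ℓ)` containing `U`. -/
theorem unipotent_subgroup_unique_maximal (U : Subgroup (GL (Fin 2) ℤ_[ℓ]))
    (hU : IsUnipotentSubgroup ℓ U) (hUnt : U ≠ ⊥) :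
    IsLine ℓ (fixedSubmodule ℓ U) ∧
    IsUnipotentSubgroup ℓ (lineFixer ℓ (fixedSubmodule ℓ U)) ∧
    U ≤ lineFixer ℓ (fixedSubmodule ℓ U) ∧
    IsMaxUnipotentSubgroup ℓ (lineFixer ℓ (fixedSubmodule ℓ U)) ∧
    ∀ V : Subgroup (GL (Fin 2) ℤ_[ℓ]), IsMaxUnipotentSubgroup ℓ V → U ≤ V →
      V = lineFixer ℓ (fixedSubmodule ℓ U) := by
  obtain ⟨A₀, hA₀U, hA₀ne⟩ :=
    (Subgroup.nontrivial_iff_exists_ne_one U).mp ((Subgroup.nontrivial_iff_ne_bot U).mpr hUnt)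
  obtain ⟨v, hline, hfix, hker, hunipline⟩ := UnipAux.exists_line_vec A₀ (hU A₀ hA₀U) hA₀ne
  have hLU : fixedSubmodule ℓ U = Submodule.span ℤ_[ℓ] {v} := by
    apply le_antisymm
    · intro w hw
      exact hker w ((UnipAux.mem_fixedSubmodule.mp hw) A₀ hA₀U)
    · rw [Submodule.span_le, Set.singleton_subset_iff]
      exact UnipAux.mem_fixedSubmodule.mpr
        (fun A hA => hfix A (hU A hA) (hU _ (mul_mem hA₀U hA)))
  have hsub : ∀ V : Subgroup (GL (Fin 2) ℤ_[ℓ]), IsUnipotentSubgroup ℓ V → A₀ ∈ V →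
      V ≤ lineFixer ℓ (Submodule.span ℤ_[ℓ] {v}) := by
    intro V hV hA₀V B hBV
    have hB := hV B hBV
    have hBv : (B : Matrix (Fin 2) (Fin 2) ℤ_[ℓ]) *ᵥ v = v :=
      hfix B hB (hV _ (mul_mem hA₀V hBV))
    refine UnipAux.mem_lineFixer.mpr ⟨UnipAux.det_eq_one_of_unip B hB, ?_⟩
    intro w hw
    obtain ⟨c, rfl⟩ := Submodule.mem_span_singleton.mp hw
    rw [Matrix.mulVec_smul, hBv]
  have hunipfix : IsUnipotentSubgroup ℓ (lineFixer ℓ (Submodule.span ℤ_[ℓ] {v})) := by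
    intro B hB
    obtain ⟨hd, hfx⟩ := UnipAux.mem_lineFixer.mp hB
    exact hunipline B hd (hfx v (Submodule.mem_span_singleton_self v))
  rw [hLU]
  refine ⟨hline, hunipfix, hsub U hU hA₀U, ⟨hunipfix, ?_⟩, ?_⟩
  · intro V hV hle
    exact le_antisymm (hsub V hV (hle (hsub U hU hA₀U hA₀U))) hle
  · intro V hV hUV
    have h1 : V ≤ lineFixer ℓ (Submodule.span ℤ_[ℓ] {v}) := hsub V hV.1 (hUV hA₀U)
    exact (hV.2 _ hunipfix h1).symm
end

section
/- In GL₂(ℤ₂) set x = [[1,2],[0,1]], y = [[1,0],[−2,1]] and z = (x·y)⁻¹. Let U₀ = U(L₀), U₁ = U(L₁), U_∞ = U(L_∞), where L₀, L₁, L_∞ are the lines in ℤ₂² spanned by (1,0), (0,1) and (1,1) respectively. Then x ∈ U₀, y ∈ U₁ and z² ∈ U_∞ (so U₀, U₁, U_∞ are the maximal unipotent subgroups containing x, y and z² respectively), and for every g ∈ GL₂(ℤ₂) whose reduction modulo 2 is the identity matrix, conjugation by g does not carry any one of U₀, U₁, U_∞ onto a different one: g U_i g⁻¹ ≠ U_j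 for all i ≠ j in {0, 1, ∞}. -/
open Matrix
open scoped MatrixGroups

variable (ℓ : ℕ) [Fact ℓ.Prime]

/-- The monodromy matrix `x = [[1,2],[0,1]]` of the Legendre family, in `GL₂(ℤ₂)`. -/
noncomputable def xLeg : GL (Fin 2) ℤ_[2] :=
  ⟨!![1, 2; 0, 1], !![1, -2; 0, 1],
    by rw [Matrix.mul_fin_two, Matrix.one_fin_two]; norm_num,
    by rw [Matrix.mul_fin_two, Matrix.one_fin_two]; norm_num⟩

/-- The monodromy matrix `y = [[1,0],[−2,1]]` of the Legendre family, in `GL₂(ℤ₂)`. -/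
noncomputable def yLeg : GL (Fin 2) ℤ_[2] :=
  ⟨!![1, 0; -2, 1], !![1, 0; 2, 1],
    by rw [Matrix.mul_fin_two, Matrix.one_fin_two]; norm_num,
    by rw [Matrix.mul_fin_two, Matrix.one_fin_two]; norm_num⟩

/-- The monodromy matrix `z = (x y)⁻¹` of the Legendre family, in `GL₂(ℤ₂)`. -/
noncomputable def zLeg : GL (Fin 2) ℤ_[2] := (xLeg * yLeg)⁻¹

/-- The maximal unipotent subgroups `U₀ = U(L₀)`, `U₁ = U(L₁)`, `U_∞ = U(L_∞)`
attached to the lines spanned by `(1,0)`, `(0,1)` and `(1,1)` in `ℤ₂²`. -/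
noncomputable def legUnip : Fin 3 → Subgroup (GL (Fin 2) ℤ_[2]) :=
  ![lineFixer 2 (Submodule.span ℤ_[2] {![1, 0]}),
    lineFixer 2 (Submodule.span ℤ_[2] {![0, 1]}),
    lineFixer 2 (Submodule.span ℤ_[2] {![1, 1]})]


section Aux

open Matrix

local notation "φ" => (PadicInt.toZMod : ℤ_[2] →+* ZMod 2)

lemma mem_lineFixer_of (A : GL (Fin 2) ℤ_[2]) (w : Fin 2 → ℤ_[2])
    (hdet : Matrix.det (A : Matrix (Fin 2) (Fin 2) ℤ_[2]) = 1)
    (hw : (A : Matrix (Fin 2) (Fin 2) ℤ_[2]) *ᵥ w = w) :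
    A ∈ lineFixer 2 (Submodule.span ℤ_[2] {w}) := by
  refine ⟨hdet, fun v hv => ?_⟩
  obtain ⟨c, rfl⟩ := Submodule.mem_span_singleton.mp hv
  rw [Matrix.mulVec_smul, hw]

lemma lineFixer_fixes {L : Submodule ℤ_[2] (Fin 2 → ℤ_[2])} {A : GL (Fin 2) ℤ_[2]}
    (hA : A ∈ lineFixer 2 L) {v : Fin 2 → ℤ_[2]} (hv : v ∈ L) :
    (A : Matrix (Fin 2) (Fin 2) ℤ_[2]) *ᵥ v = v := hA.2 v hv

noncomputable def legVec : Fin 3 → (Fin 2 → ℤ_[2]) := ![![1, 0], ![0, 1], ![1, 1]]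

noncomputable def legElt : Fin 3 → GL (Fin 2) ℤ_[2] := ![xLeg, yLeg, zLeg ^ 2]

lemma legUnip_eq (i : Fin 3) :
    legUnip i = lineFixer 2 (Submodule.span ℤ_[2] {legVec i}) := by
  fin_cases i <;> rfl

lemma zLeg_val : (zLeg : Matrix (Fin 2) (Fin 2) ℤ_[2]) = !![1, -2; 2, -3] := by
  have : (zLeg : Matrix (Fin 2) (Fin 2) ℤ_[2]) =
      (!![1, 0; 2, 1] : Matrix (Fin 2) (Fin 2) ℤ_[2]) * !![1, -2; 0, 1] := rfl
  rw [this, Matrix.mul_fin_two]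
  norm_num

lemma zLeg_sq_val : ((zLeg ^ 2 : GL (Fin 2) ℤ_[2]) : Matrix (Fin 2) (Fin 2) ℤ_[2]) =
    !![-3, 4; -4, 5] := by
  rw [Units.val_pow_eq_pow_val, sq, zLeg_val, Matrix.mul_fin_two]
  norm_num

lemma pTwoNeZero : (2 : ℤ_[2]) ≠ 0 := two_ne_zero

lemma legElt_mem (i : Fin 3) : legElt i ∈ legUnip i := by
  rw [legUnip_eq]
  fin_cases i
  · refine mem_lineFixer_of _ _ ?_ ?_
    · show Matrix.det (!![1, 2; 0, 1] : Matrix (Fin 2) (Fin 2) ℤ_[2]) = 1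
      simp [Matrix.det_fin_two_of]
    · show (!![1, 2; 0, 1] : Matrix (Fin 2) (Fin 2) ℤ_[2]) *ᵥ ![1, 0] = ![1, 0]
      funext k; fin_cases k <;>
        simp [Matrix.mulVec, dotProduct, Fin.sum_univ_two]
  · refine mem_lineFixer_of _ _ ?_ ?_
    · show Matrix.det (!![1, 0; -2, 1] : Matrix (Fin 2) (Fin 2) ℤ_[2]) = 1
      simp [Matrix.det_fin_two_of]
    · show (!![1, 0; -2, 1] : Matrix (Fin 2) (Fin 2) ℤ_[2]) *ᵥ ![0, 1] = ![0, 1]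
      funext k; fin_cases k <;>
        simp [Matrix.mulVec, dotProduct, Fin.sum_univ_two]
  · refine mem_lineFixer_of _ _ ?_ ?_
    · show Matrix.det ((zLeg ^ 2 : GL (Fin 2) ℤ_[2]) : Matrix (Fin 2) (Fin 2) ℤ_[2]) = 1
      rw [zLeg_sq_val]
      norm_num [Matrix.det_fin_two_of]
    · show ((zLeg ^ 2 : GL (Fin 2) ℤ_[2]) : Matrix (Fin 2) (Fin 2) ℤ_[2]) *ᵥ ![1, 1] = ![1, 1]
      rw [zLeg_sq_val]
      funext k; fin_cases k <;>
        (simp [Matrix.mulVec, dotProduct, Fin.sum_univ_two]; ring)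

lemma legElt_fixed (i : Fin 3) (v : Fin 2 → ℤ_[2])
    (hv : ((legElt i : GL (Fin 2) ℤ_[2]) : Matrix (Fin 2) (Fin 2) ℤ_[2]) *ᵥ v = v) :
    ∃ c : ℤ_[2], v = c • legVec i := by
  fin_cases i
  · have hv' : (!![1, 2; 0, 1] : Matrix (Fin 2) (Fin 2) ℤ_[2]) *ᵥ v = v := hv
    have h0 := congrFun hv' 0
    have h0' : (1 : ℤ_[2]) * v 0 + 2 * v 1 = v 0 := by
      simpa [Matrix.mulVec, dotProduct, Fin.sum_univ_two] using h0
    have hv1 : v 1 = 0 := by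
      have : (2 : ℤ_[2]) * v 1 = 0 := by linear_combination h0'
      exact (mul_eq_zero.mp this).resolve_left pTwoNeZero
    refine ⟨v 0, funext fun k => ?_⟩
    show v k = v 0 • (![1, 0] : Fin 2 → ℤ_[2]) k
    fin_cases k <;> simp [hv1]
  · have hv' : (!![1, 0; -2, 1] : Matrix (Fin 2) (Fin 2) ℤ_[2]) *ᵥ v = v := hv
    have h1 := congrFun hv' 1
    have h1' : (-2 : ℤ_[2]) * v 0 + 1 * v 1 = v 1 := by
      simpa [Matrix.mulVec, dotProduct, Fin.sum_univ_two] using h1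
    have hv0 : v 0 = 0 := by
      have : (2 : ℤ_[2]) * v 0 = 0 := by linear_combination -h1'
      exact (mul_eq_zero.mp this).resolve_left pTwoNeZero
    refine ⟨v 1, funext fun k => ?_⟩
    show v k = v 1 • (![0, 1] : Fin 2 → ℤ_[2]) k
    fin_cases k <;> simp [hv0]
  · have hv' : ((zLeg ^ 2 : GL (Fin 2) ℤ_[2]) : Matrix (Fin 2) (Fin 2) ℤ_[2]) *ᵥ v = v := hv
    rw [zLeg_sq_val] at hv'
    have h0 := congrFun hv' 0
    have h0' : (-3 : ℤ_[2]) * v 0 + 4 * v 1 = v 0 := by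
      simpa [Matrix.mulVec, dotProduct, Fin.sum_univ_two] using h0
    have hv01 : v 1 = v 0 := by
      have h4 : (4 : ℤ_[2]) * v 1 = 4 * v 0 := by linear_combination h0'
      have h4ne : (4 : ℤ_[2]) ≠ 0 := by
        intro h
        have h22 : (2 : ℤ_[2]) * 2 = 0 := by linear_combination h
        rcases mul_eq_zero.mp h22 with h' | h' <;> exact pTwoNeZero h'
      exact mul_left_cancel₀ h4ne h4
    refine ⟨v 0, funext fun k => ?_⟩
    show v k = v 0 • (![1, 1] : Fin 2 → ℤ_[2]) k
    fin_cases k <;> simp [hv01]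

lemma phi_legVec (i : Fin 3) (k : Fin 2) :
    φ (legVec i k) = (![![1, 0], ![0, 1], ![1, 1]] : Fin 3 → Fin 2 → ZMod 2) i k := by
  fin_cases i <;> fin_cases k <;>
    simp [legVec, Matrix.vecHead, Matrix.vecTail]

end Aux

/-- We have `x ∈ U₀`, `y ∈ U₁`, `z² ∈ U_∞`, and for every
`g ∈ GL₂(ℤ₂)` whose reduction modulo `2` is the identity matrix, conjugation by `g`
does not carry any one of `U₀, U₁, U_∞` onto a different one. -/
theorem legendre_unipotent_subgroups_not_conjugate :
    xLeg ∈ legUnip 0 ∧ yLeg ∈ legUnip 1 ∧ zLeg ^ 2 ∈ legUnip 2 ∧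
    ∀ g : GL (Fin 2) ℤ_[2],
      ((g : Matrix (Fin 2) (Fin 2) ℤ_[2]).map
        (⇑(PadicInt.toZMod : ℤ_[2] →+* ZMod 2)) = 1) →
      ∀ i j : Fin 3, i ≠ j →
        Subgroup.map ((MulAut.conj g).toMonoidHom) (legUnip i) ≠ legUnip j := by
  refine ⟨legElt_mem 0, legElt_mem 1, legElt_mem 2, ?_⟩
  intro g hg i j hij hmap
  set φ := (PadicInt.toZMod : ℤ_[2] →+* ZMod 2) with hφ
  -- reduction of g⁻¹ mod 2 is also the identity
  have hginv : ((g⁻¹ : GL (Fin 2) ℤ_[2]) : Matrix (Fin 2) (Fin 2) ℤ_[2]).map φ = 1 := by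
    have h1 : ((g : Matrix (Fin 2) (Fin 2) ℤ_[2]) *
        ((g⁻¹ : GL (Fin 2) ℤ_[2]) : Matrix (Fin 2) (Fin 2) ℤ_[2])).map φ = 1 := by
      rw [← Units.val_mul, mul_inv_cancel, Units.val_one, Matrix.map_one φ (map_zero φ) (map_one φ)]
    rw [Matrix.map_mul, hg, one_mul] at h1
    exact h1
  -- the conjugate of legElt i lies in legUnip j
  have hm : (MulAut.conj g).toMonoidHom (legElt i) ∈ legUnip j := by
    rw [← hmap]
    exact Subgroup.mem_map.mpr ⟨legElt i, legElt_mem i, rfl⟩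
  rw [legUnip_eq] at hm
  have hfixj : ((g : Matrix (Fin 2) (Fin 2) ℤ_[2]) *
        ((legElt i : GL (Fin 2) ℤ_[2]) : Matrix (Fin 2) (Fin 2) ℤ_[2]) *
        ((g⁻¹ : GL (Fin 2) ℤ_[2]) : Matrix (Fin 2) (Fin 2) ℤ_[2])) *ᵥ legVec j = legVec j := by
    have := lineFixer_fixes hm (Submodule.mem_span_singleton_self (legVec j))
    simpa [MulAut.conj_apply, Units.val_mul] using this
  set w : Fin 2 → ℤ_[2] :=
    ((g⁻¹ : GL (Fin 2) ℤ_[2]) : Matrix (Fin 2) (Fin 2) ℤ_[2]) *ᵥ legVec j with hwdef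
  have hgig : ((g⁻¹ : GL (Fin 2) ℤ_[2]) : Matrix (Fin 2) (Fin 2) ℤ_[2]) *
      (g : Matrix (Fin 2) (Fin 2) ℤ_[2]) = 1 := by
    rw [← Units.val_mul, inv_mul_cancel, Units.val_one]
  have hw : ((legElt i : GL (Fin 2) ℤ_[2]) : Matrix (Fin 2) (Fin 2) ℤ_[2]) *ᵥ w = w := by
    have h2 := congrArg (fun t => ((g⁻¹ : GL (Fin 2) ℤ_[2]) : Matrix (Fin 2) (Fin 2) ℤ_[2]) *ᵥ t)
      hfixj
    simp only [Matrix.mulVec_mulVec] at h2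
    rw [hwdef, Matrix.mulVec_mulVec]
    rw [show ((g⁻¹ : GL (Fin 2) ℤ_[2]) : Matrix (Fin 2) (Fin 2) ℤ_[2]) *
        ((g : Matrix (Fin 2) (Fin 2) ℤ_[2]) *
          ((legElt i : GL (Fin 2) ℤ_[2]) : Matrix (Fin 2) (Fin 2) ℤ_[2]) *
          ((g⁻¹ : GL (Fin 2) ℤ_[2]) : Matrix (Fin 2) (Fin 2) ℤ_[2])) =
        ((legElt i : GL (Fin 2) ℤ_[2]) : Matrix (Fin 2) (Fin 2) ℤ_[2]) *
          ((g⁻¹ : GL (Fin 2) ℤ_[2]) : Matrix (Fin 2) (Fin 2) ℤ_[2]) from by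
      rw [← mul_assoc, ← mul_assoc, hgig, one_mul]] at h2
    exact h2
  obtain ⟨c, hc⟩ := legElt_fixed i w hw
  -- reduce mod 2
  have hk : ∀ k : Fin 2, φ (legVec j k) = φ c * φ (legVec i k) := by
    intro k
    have e1 : φ (w k) = φ (legVec j k) := by
      rw [hwdef, RingHom.map_mulVec, hginv, Matrix.one_mulVec]
      rfl
    have e2 : φ (w k) = φ c * φ (legVec i k) := by
      rw [hc]
      simp only [Pi.smul_apply, smul_eq_mul, _root_.map_mul]
    rw [← e1, e2]
  have h0 := hk 0
  have h1 := hk 1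
  rw [phi_legVec, phi_legVec] at h0
  rw [phi_legVec, phi_legVec] at h1
  revert h0 h1
  generalize φ c = d
  revert hij
  fin_cases i <;> fin_cases j <;> simp <;> revert d <;> decide
end

section
/- Let ℓ be a prime, let G be a subgroup of 𝔽_ℓ^× × 𝔽_ℓ^×, and let M ⊆ G be the set of pairs (a, b) ∈ G with a ∈ {1, −1} or b ∈ {1, −1}. Let H₁ (resp. H₂) be the subgroup of 𝔽_ℓ^× generated by the first (resp. second) coordinates of the elements of M. Then the subgroup H₁² × H₂² (product of the subgroups of squares) is contained in G, and |M| · |H₁| · |H₂| ≤ 8 · (|H₁| + |H₂|) · |G|. -/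
section Aux

variable {α β : Type*} [CommGroup α] [CommGroup β]

/-- The slice of a subgroup of a product at a fixed first coordinate has at most as
many elements as the subgroup `{b | (1, b) ∈ G}`. -/
lemma slice_fst_ncard_le [Finite β] (G : Subgroup (α × β)) (ε : α) :
    {x | x ∈ G ∧ x.1 = ε}.ncard ≤ Nat.card (G.comap (MonoidHom.inr α β)) := by
  rcases Set.eq_empty_or_nonempty {x | x ∈ G ∧ x.1 = ε} with h | ⟨d, hd⟩
  · simp [h]
  · rw [← SetLike.coe_sort_coe, Nat.card_coe_set_eq]
    refine Set.ncard_le_ncard_of_injOn (fun x => d.2⁻¹ * x.2) ?_ ?_ (Set.toFinite _)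
    · rintro x ⟨hxG, hx1⟩
      have hmem : d⁻¹ * x ∈ G := mul_mem (inv_mem hd.1) hxG
      have : (MonoidHom.inr α β) (d.2⁻¹ * x.2) = d⁻¹ * x := by
        ext
        · simp [hd.2, hx1]
        · simp
      simpa [Subgroup.mem_comap, this] using hmem
    · rintro x ⟨hxG, hx1⟩ y ⟨hyG, hy1⟩ hxy
      have h2 : x.2 = y.2 := mul_left_cancel hxy
      exact Prod.ext (hx1.trans hy1.symm) h2

lemma slice_snd_ncard_le [Finite α] (G : Subgroup (α × β)) (ε : β) :
    {x | x ∈ G ∧ x.2 = ε}.ncard ≤ Nat.card (G.comap (MonoidHom.inl α β)) := by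
  rcases Set.eq_empty_or_nonempty {x | x ∈ G ∧ x.2 = ε} with h | ⟨d, hd⟩
  · simp [h]
  · rw [← SetLike.coe_sort_coe, Nat.card_coe_set_eq]
    refine Set.ncard_le_ncard_of_injOn (fun x => d.1⁻¹ * x.1) ?_ ?_ (Set.toFinite _)
    · rintro x ⟨hxG, hx1⟩
      have hmem : d⁻¹ * x ∈ G := mul_mem (inv_mem hd.1) hxG
      have : (MonoidHom.inl α β) (d.1⁻¹ * x.1) = d⁻¹ * x := by
        ext
        · simp
        · simp [hd.2, hx1]
      simpa [Subgroup.mem_comap, this] using hmem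
    · rintro x ⟨hxG, hx1⟩ y ⟨hyG, hy1⟩ hxy
      have h1 : x.1 = y.1 := mul_left_cancel hxy
      exact Prod.ext h1 (hx1.trans hy1.symm)

end Aux

/-- In the unit group of `ZMod ℓ` (ℓ prime) the squares have index at most 2 in any
subgroup. -/
lemma card_le_two_mul_card_sq (ℓ : ℕ) [Fact ℓ.Prime] (H : Subgroup (ZMod ℓ)ˣ) :
    Nat.card H ≤ 2 * Nat.card (H.map (powMonoidHom 2)) := by
  have : NeZero ℓ := ⟨(Fact.out : ℓ.Prime).ne_zero⟩
  set φ : H →* (ZMod ℓ)ˣ := (powMonoidHom 2).comp H.subtype with hφ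
  have hrange : φ.range = H.map (powMonoidHom 2) := by
    rw [hφ, MonoidHom.range_comp, Subgroup.range_subtype]
  have hker : Nat.card φ.ker ≤ 2 := by
    have hsub : Nat.card φ.ker ≤ Nat.card ({1, -1} : Set (ZMod ℓ)ˣ) := by
      refine Nat.card_le_card_of_injective
        (fun x => ⟨(x : H), ?_⟩) ?_
      · have hx : ((x : H) : (ZMod ℓ)ˣ) ^ 2 = 1 := x.2
        have hx' : (((x : H) : (ZMod ℓ)ˣ) : ZMod ℓ) ^ 2 = 1 := by
          have := congrArg Units.val hx
          rwa [Units.val_pow_eq_pow_val, Units.val_one] at this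
        have h0 : ((((x : H) : (ZMod ℓ)ˣ) : ZMod ℓ) - 1) *
            ((((x : H) : (ZMod ℓ)ˣ) : ZMod ℓ) + 1) = 0 := by ring_nf; linear_combination hx'
        rcases mul_eq_zero.mp h0 with h | h
        · left
          ext
          rw [Units.val_one]
          linear_combination h
        · right
          ext
          rw [Units.val_neg, Units.val_one]
          linear_combination h
      · intro x y hxy
        simp only [Subtype.mk.injEq] at hxy
        exact Subtype.ext (Subtype.ext hxy)
    calc Nat.card φ.ker ≤ Nat.card ({1, -1} : Set (ZMod ℓ)ˣ) := hsub
      _ = ({1, -1} : Set (ZMod ℓ)ˣ).ncard := Nat.card_coe_set_eq _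
      _ ≤ ({-1} : Set (ZMod ℓ)ˣ).ncard + 1 := Set.ncard_insert_le _ _
      _ ≤ 2 := by rw [Set.ncard_singleton]
  have hq : Nat.card (H ⧸ φ.ker) = Nat.card φ.range :=
    Nat.card_congr (QuotientGroup.quotientKerEquivRange φ).toEquiv
  calc Nat.card H = Nat.card (H ⧸ φ.ker) * Nat.card φ.ker :=
        Subgroup.card_eq_card_quotient_mul_card_subgroup φ.ker
    _ ≤ Nat.card (H ⧸ φ.ker) * 2 := Nat.mul_le_mul_left _ hker
    _ = 2 * Nat.card (H.map (powMonoidHom 2)) := by rw [hq, hrange]; ring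

/-- Let `ℓ` be a prime, `G ≤ 𝔽_ℓˣ × 𝔽_ℓˣ` a subgroup, and `M ⊆ G`
the set of pairs having some coordinate equal to `1` or `−1`.  Let `H₁` (resp. `H₂`)
be the subgroup of `𝔽_ℓˣ` generated by the first (resp. second) coordinates of the
elements of `M`.  Then `H₁² × H₂² ⊆ G` and
`|M| · |H₁| · |H₂| ≤ 8 · (|H₁| + |H₂|) · |G|`. -/
theorem subgroup_of_product_pm_one_coordinate_count (ℓ : ℕ) (hℓ : ℓ.Prime)
    (G : Subgroup ((ZMod ℓ)ˣ × (ZMod ℓ)ˣ)) :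
    let M : Set ((ZMod ℓ)ˣ × (ZMod ℓ)ˣ) :=
      {x | x ∈ G ∧ (x.1 = 1 ∨ x.1 = -1 ∨ x.2 = 1 ∨ x.2 = -1)}
    let H₁ : Subgroup (ZMod ℓ)ˣ := Subgroup.closure (Prod.fst '' M)
    let H₂ : Subgroup (ZMod ℓ)ˣ := Subgroup.closure (Prod.snd '' M)
    (Subgroup.prod (Subgroup.map (powMonoidHom 2) H₁)
        (Subgroup.map (powMonoidHom 2) H₂) ≤ G) ∧
    Nat.card M * Nat.card H₁ * Nat.card H₂ ≤
      8 * (Nat.card H₁ + Nat.card H₂) * Nat.card G := by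
  intro M H₁ H₂
  haveI : Fact ℓ.Prime := ⟨hℓ⟩
  haveI : NeZero ℓ := ⟨hℓ.ne_zero⟩
  set K₁ : Subgroup (ZMod ℓ)ˣ := G.comap (MonoidHom.inl _ _) with hK₁
  set K₂ : Subgroup (ZMod ℓ)ˣ := G.comap (MonoidHom.inr _ _) with hK₂
  -- squares of generators of H₁ land in K₁
  have sq₁ : H₁.map (powMonoidHom 2) ≤ K₁ := by
    rw [show H₁ = Subgroup.closure (Prod.fst '' M) from rfl, MonoidHom.map_closure,
      Subgroup.closure_le]
    rintro a ⟨_, ⟨x, hx, rfl⟩, rfl⟩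
    obtain ⟨hxG, hx1⟩ := hx
    rcases hx1 with h | h | h | h
    · simp only [powMonoidHom_apply, h, one_pow]; exact Subgroup.one_mem _
    · simp only [powMonoidHom_apply, h, neg_one_sq]; exact Subgroup.one_mem _
    · have hx2 : x ^ 2 ∈ G := pow_mem hxG 2
      have heq : x ^ 2 = (MonoidHom.inl (ZMod ℓ)ˣ (ZMod ℓ)ˣ) (x.1 ^ 2) := by
        ext <;> simp [h]
      rw [heq] at hx2
      exact hx2
    · have hx2 : x ^ 2 ∈ G := pow_mem hxG 2
      have heq : x ^ 2 = (MonoidHom.inl (ZMod ℓ)ˣ (ZMod ℓ)ˣ) (x.1 ^ 2) := by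
        ext <;> simp [h]
      rw [heq] at hx2
      exact hx2
  have sq₂ : H₂.map (powMonoidHom 2) ≤ K₂ := by
    rw [show H₂ = Subgroup.closure (Prod.snd '' M) from rfl, MonoidHom.map_closure,
      Subgroup.closure_le]
    rintro a ⟨_, ⟨x, hx, rfl⟩, rfl⟩
    obtain ⟨hxG, hx1⟩ := hx
    rcases hx1 with h | h | h | h
    · have hx2 : x ^ 2 ∈ G := pow_mem hxG 2
      have heq : x ^ 2 = (MonoidHom.inr (ZMod ℓ)ˣ (ZMod ℓ)ˣ) (x.2 ^ 2) := by
        ext <;> simp [h]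
      rw [heq] at hx2
      exact hx2
    · have hx2 : x ^ 2 ∈ G := pow_mem hxG 2
      have heq : x ^ 2 = (MonoidHom.inr (ZMod ℓ)ˣ (ZMod ℓ)ˣ) (x.2 ^ 2) := by
        ext <;> simp [h]
      rw [heq] at hx2
      exact hx2
    · simp only [powMonoidHom_apply, h, one_pow]; exact Subgroup.one_mem _
    · simp only [powMonoidHom_apply, h, neg_one_sq]; exact Subgroup.one_mem _
  have memG : ∀ a b : (ZMod ℓ)ˣ, a ∈ K₁ → b ∈ K₂ → (a, b) ∈ G := by
    intro a b ha hb
    have h1 : ((a, 1) : (ZMod ℓ)ˣ × (ZMod ℓ)ˣ) ∈ G := ha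
    have h2 : ((1, b) : (ZMod ℓ)ˣ × (ZMod ℓ)ˣ) ∈ G := hb
    have : ((a, b) : (ZMod ℓ)ˣ × (ZMod ℓ)ˣ) = (a, 1) * (1, b) := by
      ext <;> simp
    rw [this]; exact mul_mem h1 h2
  constructor
  · rintro ⟨a, b⟩ hab
    rw [Subgroup.mem_prod] at hab
    exact memG a b (sq₁ hab.1) (sq₂ hab.2)
  · -- counting
    have hprod : ∀ (A : Subgroup (ZMod ℓ)ˣ), A ≤ K₁ →
        Nat.card A * Nat.card K₂ ≤ Nat.card G := by
      intro A hA
      have hle : A.prod K₂ ≤ G := by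
        rintro ⟨a, b⟩ hab
        rw [Subgroup.mem_prod] at hab
        exact memG a b (hA hab.1) hab.2
      calc Nat.card A * Nat.card K₂ = Nat.card (A.prod K₂) := by
            rw [Nat.card_congr (Subgroup.prodEquiv A K₂).toEquiv, Nat.card_prod]
        _ ≤ Nat.card G := Subgroup.card_le_of_le hle
    have hprod' : ∀ (A : Subgroup (ZMod ℓ)ˣ), A ≤ K₂ →
        Nat.card K₁ * Nat.card A ≤ Nat.card G := by
      intro A hA
      have hle : K₁.prod A ≤ G := by
        rintro ⟨a, b⟩ hab
        rw [Subgroup.mem_prod] at hab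
        exact memG a b hab.1 (hA hab.2)
      calc Nat.card K₁ * Nat.card A = Nat.card (K₁.prod A) := by
            rw [Nat.card_congr (Subgroup.prodEquiv K₁ A).toEquiv, Nat.card_prod]
        _ ≤ Nat.card G := Subgroup.card_le_of_le hle
    have h1 : Nat.card H₁ * Nat.card K₂ ≤ 2 * Nat.card G := by
      calc Nat.card H₁ * Nat.card K₂
          ≤ (2 * Nat.card (H₁.map (powMonoidHom 2))) * Nat.card K₂ :=
            Nat.mul_le_mul_right _ (card_le_two_mul_card_sq ℓ H₁)
        _ = 2 * (Nat.card (H₁.map (powMonoidHom 2)) * Nat.card K₂) := by ring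
        _ ≤ 2 * Nat.card G := Nat.mul_le_mul_left _ (hprod _ sq₁)
    have h2 : Nat.card K₁ * Nat.card H₂ ≤ 2 * Nat.card G := by
      calc Nat.card K₁ * Nat.card H₂
          ≤ Nat.card K₁ * (2 * Nat.card (H₂.map (powMonoidHom 2))) :=
            Nat.mul_le_mul_left _ (card_le_two_mul_card_sq ℓ H₂)
        _ = 2 * (Nat.card K₁ * Nat.card (H₂.map (powMonoidHom 2))) := by ring
        _ ≤ 2 * Nat.card G := Nat.mul_le_mul_left _ (hprod' _ sq₂)
    have hM : Nat.card M ≤ 2 * Nat.card K₂ + 2 * Nat.card K₁ := by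
      have hsub : M ⊆ {x | x ∈ G ∧ x.1 = 1} ∪ {x | x ∈ G ∧ x.1 = -1} ∪
          ({x | x ∈ G ∧ x.2 = 1} ∪ {x | x ∈ G ∧ x.2 = -1}) := by
        rintro x ⟨hxG, h | h | h | h⟩
        · exact Or.inl (Or.inl ⟨hxG, h⟩)
        · exact Or.inl (Or.inr ⟨hxG, h⟩)
        · exact Or.inr (Or.inl ⟨hxG, h⟩)
        · exact Or.inr (Or.inr ⟨hxG, h⟩)
      calc Nat.card M = M.ncard := Nat.card_coe_set_eq _
        _ ≤ _ := Set.ncard_le_ncard hsub (Set.toFinite _)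
        _ ≤ ({x | x ∈ G ∧ x.1 = 1} ∪ {x | x ∈ G ∧ x.1 = -1}).ncard +
            ({x | x ∈ G ∧ x.2 = 1} ∪ {x | x ∈ G ∧ x.2 = -1}).ncard :=
            Set.ncard_union_le _ _
        _ ≤ ({x | x ∈ G ∧ x.1 = 1}.ncard + {x | x ∈ G ∧ x.1 = -1}.ncard) +
            ({x | x ∈ G ∧ x.2 = 1}.ncard + {x | x ∈ G ∧ x.2 = -1}.ncard) :=
            Nat.add_le_add (Set.ncard_union_le _ _) (Set.ncard_union_le _ _)
        _ ≤ (Nat.card K₂ + Nat.card K₂) + (Nat.card K₁ + Nat.card K₁) :=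
            Nat.add_le_add
              (Nat.add_le_add (slice_fst_ncard_le G 1) (slice_fst_ncard_le G (-1)))
              (Nat.add_le_add (slice_snd_ncard_le G 1) (slice_snd_ncard_le G (-1)))
        _ = 2 * Nat.card K₂ + 2 * Nat.card K₁ := by ring
    nlinarith [Nat.mul_le_mul_right (Nat.card H₁ * Nat.card H₂) hM,
      Nat.mul_le_mul_right (Nat.card H₁) h2,
      Nat.mul_le_mul_right (Nat.card H₂) h1,
      Nat.zero_le (Nat.card H₁), Nat.zero_le (Nat.card H₂),
      Nat.zero_le (Nat.card G), Nat.zero_le (Nat.card M)]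
end
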